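/- arXiv:1705.09218 — 2 statements merged into one kernel-verified Lean document; each statement's English description precedes it below -/
import Mathlib

section
/- If Mk is a stable matching incomparable with M (neither dominates the other) with closed subsets Sk and S satisfying Sk ∩ S = ∅, then d(Mk, M) = |X(Sk)| + |X(S)|, where X(T) is the set of men involved in rotations of T; in particular d(Mk, M) ≥ |X(S)| ≥ d(M↑, M) for any stable matching M↑ corresponding to a closed subset contained in S. -/
/-- A stable-marriage instance with `n` men and `n` women: each man `m` ranks the
women via `mrank m` (lower rank = more preferred), each woman `w` ranks the men
via `wrank w`; rankings are strict, i.e. injective. -/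
structure SMInst (n : ℕ) where
  mrank : Fin n → Fin n → ℕ
  wrank : Fin n → Fin n → ℕ
  mrank_inj : ∀ m, Function.Injective (mrank m)
  wrank_inj : ∀ w, Function.Injective (wrank w)

namespace SMInst

variable {n : ℕ} (I : SMInst n)

/-- A matching is a bijection from men to women; the pair `(m, w)` blocks `M` if `m`
strictly prefers `w` to his partner `M m` and `w` strictly prefers `m` to her partner. -/
def Blocks (M : Fin n ≃ Fin n) (m w : Fin n) : Prop :=
  I.mrank m w < I.mrank m (M m) ∧ I.wrank w m < I.wrank w (M.symm w)

/-- A matching is stable iff it admits no blocking pair. -/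
def IsStable (M : Fin n ≃ Fin n) : Prop :=
  ∀ m w, ¬ I.Blocks M m w

/-- `M₁ ⪯ M₂` : every man weakly prefers his partner in `M₁` to his partner in `M₂`. -/
def Dominates (M₁ M₂ : Fin n ≃ Fin n) : Prop :=
  ∀ m, I.mrank m (M₁ m) ≤ I.mrank m (M₂ m)

/-- The man-optimal stable matching (the output of men-proposing Gale–Shapley):
stable and dominating every stable matching. -/
def IsManOptimal (M₀ : Fin n ≃ Fin n) : Prop :=
  I.IsStable M₀ ∧ ∀ M, I.IsStable M → I.Dominates M₀ M

/-- The woman-optimal (man-pessimal) stable matching. -/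
def IsWomanOptimal (Mz : Fin n ≃ Fin n) : Prop :=
  I.IsStable Mz ∧ ∀ M, I.IsStable M → I.Dominates M Mz

/-- `d(M, M')` : the number of men with different partners in `M` and `M'`. -/
def mdist (M M' : Fin n ≃ Fin n) : ℕ :=
  let _ := I
  (Finset.univ.filter fun m => M m ≠ M' m).card

/-- `L` is a rotation exposed in `M`: a cyclic list of at least two pairs `(mᵢ, wᵢ)` of `M`
with distinct men, such that `w_{i+1}` is the first woman strictly below `wᵢ` on `mᵢ`'s
list who prefers `mᵢ` to her `M`-partner. -/
def ExposedIn (M : Fin n ≃ Fin n) (L : List (Fin n × Fin n)) : Prop :=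
  2 ≤ L.length ∧ (L.map Prod.fst).Nodup ∧ (∀ p ∈ L, M p.1 = p.2) ∧
  ∀ i : Fin L.length,
    I.mrank (L.get i).1 (L.get i).2 <
      I.mrank (L.get i).1 (L.get ⟨(i.1 + 1) % L.length, Nat.mod_lt _ i.pos⟩).2 ∧
    I.wrank (L.get ⟨(i.1 + 1) % L.length, Nat.mod_lt _ i.pos⟩).2 (L.get i).1 <
      I.wrank (L.get ⟨(i.1 + 1) % L.length, Nat.mod_lt _ i.pos⟩).2
        (L.get ⟨(i.1 + 1) % L.length, Nat.mod_lt _ i.pos⟩).1 ∧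
    ∀ w, I.mrank (L.get i).1 (L.get i).2 < I.mrank (L.get i).1 w →
      I.mrank (L.get i).1 w <
        I.mrank (L.get i).1 (L.get ⟨(i.1 + 1) % L.length, Nat.mod_lt _ i.pos⟩).2 →
      ¬ I.wrank w (L.get i).1 < I.wrank w (M.symm w)

/-- `M'` is obtained from `M` by eliminating the rotation `L` exposed in `M`:
each man `mᵢ` of `L` moves to `w_{i+1}`, all other men keep their partners. -/
def Elim (M M' : Fin n ≃ Fin n) (L : List (Fin n × Fin n)) : Prop :=
  I.ExposedIn M L ∧
  (∀ i : Fin L.length,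
    M' (L.get i).1 = (L.get ⟨(i.1 + 1) % L.length, Nat.mod_lt _ i.pos⟩).2) ∧
  ∀ m : Fin n, m ∉ L.map Prod.fst → M' m = M m

/-- `ElimSeq M Ls M'` : applying the rotations of `Ls` in order starting from `M` yields `M'`. -/
def ElimSeq : (Fin n ≃ Fin n) → List (List (Fin n × Fin n)) → (Fin n ≃ Fin n) → Prop
  | M, [], M' => M' = M
  | M, L :: Ls, M' => ∃ Mmid, I.Elim M Mmid L ∧ ElimSeq Mmid Ls M'

/-- A rotation of the instance: a cyclic list exposed in some stable matching. -/
def IsRotation (L : List (Fin n × Fin n)) : Prop :=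
  ∃ M, I.IsStable M ∧ I.ExposedIn M L

/-- `ρ' ≪ ρ` : `ρ'` is eliminated in every sequence of rotation eliminations starting at
the man-optimal matching `M₀` and ending at a stable matching in which `ρ` is exposed.
(Rotations are identified up to their sets of pairs.) -/
def Precedes (L' L : List (Fin n × Fin n)) : Prop :=
  ∀ M₀ Ls M, I.IsManOptimal M₀ → I.ElimSeq M₀ Ls M → I.IsStable M → I.ExposedIn M L →
    ∃ K ∈ Ls, K.toFinset = L'.toFinset

/-- The rotation `L` produces the pair `(m, w)` : eliminating `L` matches `m` to `w`. -/
def Produces (L : List (Fin n × Fin n)) (m w : Fin n) : Prop :=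
  let _ := I
  ∃ i : Fin L.length,
    (L.get i).1 = m ∧ (L.get ⟨(i.1 + 1) % L.length, Nat.mod_lt _ i.pos⟩).2 = w

/-- The set of rotations of the instance, identified with their sets of pairs. -/
def RotSet : Set (Finset (Fin n × Fin n)) :=
  {R | ∃ L, I.IsRotation L ∧ L.toFinset = R}

/-- Precedence of rotations, on rotations-as-sets-of-pairs. -/
def PrecedesR (R' R : Finset (Fin n × Fin n)) : Prop :=
  ∃ L' L, I.IsRotation L' ∧ I.IsRotation L ∧ L'.toFinset = R' ∧ L.toFinset = R ∧
    I.Precedes L' L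

/-- Closed subsets (down-sets) of the rotation poset. -/
def IsClosedF (S : Finset (Finset (Fin n × Fin n))) : Prop :=
  (∀ R ∈ S, R ∈ I.RotSet) ∧ ∀ R ∈ S, ∀ R' ∈ I.RotSet, I.PrecedesR R' R → R' ∈ S

/-- `X(T)` : the set of men involved in at least one rotation of `T`. -/
def menOf (T : Finset (Finset (Fin n × Fin n))) : Finset (Fin n) :=
  let _ := I
  T.biUnion fun R => R.image Prod.fst

/-- The stable matching corresponding to the closed subset `S`: obtained from `M₀` by
eliminating the rotations of `S`, each exactly once, in some valid order. -/
def Corresponds (M₀ : Fin n ≃ Fin n) (S : Finset (Finset (Fin n × Fin n)))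
    (M : Fin n ≃ Fin n) : Prop :=
  ∃ Ls : List (List (Fin n × Fin n)),
    (Ls.map List.toFinset).Nodup ∧ (Ls.map List.toFinset).toFinset = S ∧
    I.ElimSeq M₀ Ls M

end SMInst
namespace SMInst

variable {n : ℕ} (I : SMInst n)

/-! ### auxiliary development -/

/-- successor index in a cyclic list -/
abbrev inext {α : Type*} {L : List α} (i : Fin L.length) : Fin L.length :=
  ⟨(i.1 + 1) % L.length, Nat.mod_lt _ i.pos⟩

variable {I} {M M' B N N₁ N₂ : Fin n ≃ Fin n} {L L' K ρ ρ' : List (Fin n × Fin n)}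

lemma mem_map_fst {x : Fin n} :
    x ∈ L.map Prod.fst ↔ ∃ i : Fin L.length, (L.get i).1 = x := by
  constructor
  · intro h
    obtain ⟨p, hp, rfl⟩ := List.mem_map.1 h
    obtain ⟨i, rfl⟩ := List.mem_iff_get.1 hp
    exact ⟨i, rfl⟩
  · rintro ⟨i, rfl⟩
    exact List.mem_map.2 ⟨L.get i, L.get_mem i, rfl⟩

lemma ExposedIn.pair_eq (hE : I.ExposedIn M L) {p : Fin n × Fin n} (hp : p ∈ L) :
    M p.1 = p.2 := hE.2.2.1 p hp

lemma ExposedIn.get_pair (hE : I.ExposedIn M L) (i : Fin L.length) :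
    M (L.get i).1 = (L.get i).2 := hE.pair_eq (L.get_mem i)

lemma ExposedIn.symm_get (hE : I.ExposedIn M L) (i : Fin L.length) :
    M.symm (L.get i).2 = (L.get i).1 := by
  rw [← hE.get_pair i, Equiv.symm_apply_apply]

/-- the conditions of exposure, with the next man expressed via `M.symm`. -/
lemma ExposedIn.spec (hE : I.ExposedIn M L) (i : Fin L.length) :
    I.mrank (L.get i).1 (L.get i).2 < I.mrank (L.get i).1 (L.get (inext i)).2 ∧
    I.wrank (L.get (inext i)).2 (L.get i).1 <
      I.wrank (L.get (inext i)).2 (M.symm (L.get (inext i)).2) ∧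
    ∀ w, I.mrank (L.get i).1 (L.get i).2 < I.mrank (L.get i).1 w →
      I.mrank (L.get i).1 w < I.mrank (L.get i).1 (L.get (inext i)).2 →
      ¬ I.wrank w (L.get i).1 < I.wrank w (M.symm w) := by
  obtain ⟨a, b, c⟩ := hE.2.2.2 i
  exact ⟨a, by rwa [hE.symm_get (inext i)], c⟩

/-- uniqueness of the successor woman. -/
lemma succ_unique {x w w₁ w₂ : Fin n}
    (h₁ : I.mrank x w < I.mrank x w₁)
    (hp₁ : I.wrank w₁ x < I.wrank w₁ (M.symm w₁))
    (hm₁ : ∀ v, I.mrank x w < I.mrank x v → I.mrank x v < I.mrank x w₁ →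
      ¬ I.wrank v x < I.wrank v (M.symm v))
    (h₂ : I.mrank x w < I.mrank x w₂)
    (hp₂ : I.wrank w₂ x < I.wrank w₂ (M.symm w₂))
    (hm₂ : ∀ v, I.mrank x w < I.mrank x v → I.mrank x v < I.mrank x w₂ →
      ¬ I.wrank v x < I.wrank v (M.symm v)) : w₁ = w₂ := by
  rcases lt_trichotomy (I.mrank x w₁) (I.mrank x w₂) with h | h | h
  · exact absurd hp₁ (hm₂ w₁ h₁ h)
  · exact I.mrank_inj x h
  · exact absurd hp₂ (hm₁ w₂ h₂ h)

/-- in a fixed matching, the pair following a given man is determined. -/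
lemma next_eq (hE : I.ExposedIn M L) (hE' : I.ExposedIn M L')
    (i : Fin L.length) (j : Fin L'.length) (hx : (L.get i).1 = (L'.get j).1) :
    L.get (inext i) = L'.get (inext j) := by
  have hw : (L.get i).2 = (L'.get j).2 := by
    rw [← hE.get_pair i, ← hE'.get_pair j, hx]
  obtain ⟨a, b, c⟩ := hE.spec i
  obtain ⟨a', b', c'⟩ := hE'.spec j
  rw [← hx] at a' b' c'
  rw [← hw] at a' c'
  have h2 : (L.get (inext i)).2 = (L'.get (inext j)).2 := succ_unique a b c a' b' c'
  have h1 : (L.get (inext i)).1 = (L'.get (inext j)).1 := by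
    rw [← hE.symm_get (inext i), ← hE'.symm_get (inext j), h2]
  exact Prod.ext h1 h2

lemma inext_iter {α : Type*} {L : List α} (i : Fin L.length) (k : ℕ) :
    ((inext)^[k] i).1 = (i.1 + k) % L.length := by
  induction k with
  | zero => simp [Nat.mod_eq_of_lt i.2]
  | succ k ih =>
      rw [Function.iterate_succ_apply']
      show ((inext^[k] i).1 + 1) % L.length = _
      rw [ih, Nat.mod_add_mod, ← Nat.add_assoc]

lemma walk (hE : I.ExposedIn M L) (hE' : I.ExposedIn M L')
    (i : Fin L.length) (j : Fin L'.length) (hx : L.get i = L'.get j) (k : ℕ) :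
    L.get (inext^[k] i) = L'.get (inext^[k] j) := by
  induction k with
  | zero => exact hx
  | succ k ih =>
      rw [Function.iterate_succ_apply', Function.iterate_succ_apply']
      exact next_eq hE hE' _ _ (by rw [ih])

/-- every index of `L` is reachable from `i` by iterating `inext`. -/
lemma inext_reaches {α : Type*} {L : List α} (i i' : Fin L.length) :
    ∃ k, inext^[k] i = i' := by
  refine ⟨L.length + i'.1 - i.1, Fin.ext ?_⟩
  rw [inext_iter]
  have h1 : i.1 ≤ L.length + i'.1 := le_trans (le_of_lt i.2) (Nat.le_add_right _ _)
  rw [Nat.add_sub_cancel' h1]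
  rw [Nat.add_comm, Nat.add_mod_right, Nat.mod_eq_of_lt i'.2]

/-- two rotations exposed in the same matching sharing a man are equal as lists of pairs
(up to which pairs occur). -/
lemma toFinset_eq_of_shared_man (hE : I.ExposedIn M L) (hE' : I.ExposedIn M L')
    {x : Fin n} (hx : x ∈ L.map Prod.fst) (hx' : x ∈ L'.map Prod.fst) :
    L.toFinset = L'.toFinset := by
  obtain ⟨i, hi⟩ := mem_map_fst.1 hx
  obtain ⟨j, hj⟩ := mem_map_fst.1 hx'
  have hij : L.get i = L'.get j := by
    refine Prod.ext (hi.trans hj.symm) ?_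
    rw [← hE.get_pair i, ← hE'.get_pair j, hi, hj]
  ext p
  simp only [List.mem_toFinset, List.mem_iff_get]
  constructor
  · rintro ⟨i', rfl⟩
    obtain ⟨k, hk⟩ := inext_reaches i i'
    exact ⟨inext^[k] j, (hk ▸ walk hE hE' i j hij k).symm⟩
  · rintro ⟨j', rfl⟩
    obtain ⟨k, hk⟩ := inext_reaches j j'
    exact ⟨inext^[k] i, hk ▸ walk hE hE' i j hij k⟩

lemma mem_fst_of_toFinset_eq (h : L.toFinset = L'.toFinset) {x : Fin n}
    (hx : x ∈ L.map Prod.fst) : x ∈ L'.map Prod.fst := by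
  obtain ⟨p, hp, rfl⟩ := List.mem_map.1 hx
  exact List.mem_map.2 ⟨p, List.mem_toFinset.1 (h ▸ List.mem_toFinset.2 hp), rfl⟩



variable {n : ℕ} {I : SMInst n} {M M' B N N₁ N₂ : Fin n ≃ Fin n}
  {L L' K ρ ρ' : List (Fin n × Fin n)}

lemma Elim.exposed (h : I.Elim B N L) : I.ExposedIn B L := h.1

lemma Elim.apply_get (h : I.Elim B N L) (i : Fin L.length) :
    N (L.get i).1 = (L.get (inext i)).2 := h.2.1 i

lemma Elim.apply_not_mem (h : I.Elim B N L) {x : Fin n} (hx : x ∉ L.map Prod.fst) :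
    N x = B x := h.2.2 x hx

lemma Elim.symm_get (h : I.Elim B N L) (i : Fin L.length) :
    N.symm (L.get (inext i)).2 = (L.get i).1 := by
  rw [← h.apply_get i, Equiv.symm_apply_apply]

lemma Elim.symm_not_mem (h : I.Elim B N L) {w : Fin n} (hw : w ∉ L.map Prod.snd) :
    N.symm w = B.symm w := by
  have hy : B.symm w ∉ L.map Prod.fst := by
    intro hmem
    obtain ⟨i, hi⟩ := mem_map_fst.1 hmem
    apply hw
    have hB : B (B.symm w) = (L.get i).2 := by rw [← hi]; exact h.exposed.get_pair i
    rw [Equiv.apply_symm_apply] at hB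
    exact hB ▸ List.mem_map.2 ⟨L.get i, L.get_mem i, rfl⟩
  have hN : N (B.symm w) = w := by rw [h.apply_not_mem hy, Equiv.apply_symm_apply]
  exact (N.symm_apply_eq).2 hN.symm

/-- the predecessor index. -/
lemma exists_inext_eq {α : Type*} {L : List α} (i : Fin L.length) :
    ∃ j : Fin L.length, inext j = i := by
  obtain ⟨k, hk⟩ := inext_reaches (inext i) i
  refine ⟨inext^[k] i, ?_⟩
  rw [← Function.iterate_succ_apply' inext k i, Function.iterate_succ_apply]
  exact hk

lemma mem_map_snd {w : Fin n} :
    w ∈ L.map Prod.snd ↔ ∃ i : Fin L.length, (L.get i).2 = w := by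
  constructor
  · intro h
    obtain ⟨p, hp, rfl⟩ := List.mem_map.1 h
    obtain ⟨i, rfl⟩ := List.mem_iff_get.1 hp
    exact ⟨i, rfl⟩
  · rintro ⟨i, rfl⟩
    exact List.mem_map.2 ⟨L.get i, L.get_mem i, rfl⟩

lemma Elim.improves (h : I.Elim B N L) {w : Fin n} (hw : w ∈ L.map Prod.snd) :
    I.wrank w (N.symm w) < I.wrank w (B.symm w) := by
  obtain ⟨i, rfl⟩ := mem_map_snd.1 hw
  obtain ⟨j, rfl⟩ := exists_inext_eq i
  rw [h.symm_get j, h.exposed.symm_get (inext j)]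
  exact (h.exposed.spec j).2.1.trans_le (le_of_eq (by rw [h.exposed.symm_get (inext j)]))

lemma Elim.not_lt_symm (h : I.Elim B N L) {w x : Fin n}
    (hx : ¬ I.wrank w x < I.wrank w (B.symm w)) :
    ¬ I.wrank w x < I.wrank w (N.symm w) := by
  by_cases hw : w ∈ L.map Prod.snd
  · have h1 := h.improves hw
    intro hc
    exact hx (hc.trans h1)
  · rwa [h.symm_not_mem hw]

lemma Elim.rank_lt (h : I.Elim B N L) {x : Fin n} (hx : x ∈ L.map Prod.fst) :
    I.mrank x (B x) < I.mrank x (N x) := by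
  obtain ⟨i, rfl⟩ := mem_map_fst.1 hx
  rw [h.apply_get i, h.exposed.get_pair i]
  exact (h.exposed.spec i).1

lemma Elim.rank_le (h : I.Elim B N L) (x : Fin n) :
    I.mrank x (B x) ≤ I.mrank x (N x) := by
  by_cases hx : x ∈ L.map Prod.fst
  · exact (h.rank_lt hx).le
  · rw [h.apply_not_mem hx]

/-- persistence: eliminating a men-disjoint rotation preserves exposure. -/
lemma Elim.preserves_exposed (h : I.Elim B N L) (hE' : I.ExposedIn B L')
    (hd : ∀ x ∈ L'.map Prod.fst, x ∉ L.map Prod.fst) : I.ExposedIn N L' := by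
  obtain ⟨hlen, hnd, hpair, hspec⟩ := hE'
  have hE' : I.ExposedIn B L' := ⟨hlen, hnd, hpair, hspec⟩
  refine ⟨hlen, hnd, ?_, ?_⟩
  · intro p hp
    rw [h.apply_not_mem (hd p.1 (List.mem_map.2 ⟨p, hp, rfl⟩)), hpair p hp]
  · intro i
    obtain ⟨a, b, c⟩ := hspec i
    refine ⟨a, b, fun w h1 h2 => ?_⟩
    exact h.not_lt_symm (c w h1 h2)

/-- existence of elimination. -/
lemma ExposedIn.exists_elim (hE : I.ExposedIn M L) : ∃ N, I.Elim M N L := by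
  have hw_eq : L.map Prod.snd = (L.map Prod.fst).map M := by
    rw [List.map_map]
    exact List.map_congr_left fun p hp => (hE.pair_eq hp).symm
  have hwn : (L.map Prod.snd).Nodup := by
    rw [hw_eq]; exact hE.2.1.map M.injective
  refine ⟨M.trans (List.formPerm (L.map Prod.snd)), hE, fun i => ?_, fun x hx => ?_⟩
  · have hlw : (L.map Prod.snd).length = L.length := L.length_map _
    have hiw : i.1 < (L.map Prod.snd).length := by rw [hlw]; exact i.2
    have hgi : (L.map Prod.snd)[i.1] = (L.get i).2 := by
      simp [List.getElem_map]
    have := List.formPerm_apply_getElem (L.map Prod.snd) hwn i.1 hiw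
    simp only [Equiv.trans_apply]
    rw [hE.get_pair i, ← hgi, this]
    simp [List.getElem_map, hlw]
  · simp only [Equiv.trans_apply]
    have : M x ∉ L.map Prod.snd := by
      intro hmem
      obtain ⟨i, hi⟩ := mem_map_snd.1 hmem
      apply hx
      have : (L.get i).1 = x := M.injective (by rw [hE.get_pair i, hi])
      exact this ▸ List.mem_map.2 ⟨L.get i, L.get_mem i, rfl⟩
    rw [List.formPerm_apply_of_notMem this]

/-- determinism of elimination for rotations with the same pair set. -/
lemma elim_unique (h1 : I.Elim B N L) (h2 : I.Elim B N' L')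
    (hset : L.toFinset = L'.toFinset) : N = N' := by
  ext x
  by_cases hx : x ∈ L.map Prod.fst
  · obtain ⟨i, hi⟩ := mem_map_fst.1 hx
    obtain ⟨j, hj⟩ := mem_map_fst.1 (mem_fst_of_toFinset_eq hset hx)
    obtain ⟨a, b, c⟩ := h1.exposed.spec i
    obtain ⟨a', b', c'⟩ := h2.exposed.spec j
    have hw : (L.get i).2 = (L'.get j).2 := by
      rw [← h1.exposed.get_pair i, ← h2.exposed.get_pair j, hi, hj]
    rw [hi] at a b c
    rw [hj] at a' b' c'
    rw [hw] at a c
    have := succ_unique a b c a' b' c'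
    rw [← hi, h1.apply_get i, hi, this, ← hj, ← h2.apply_get j, hj]
  · have hx' : x ∉ L'.map Prod.fst := fun hc =>
      hx (mem_fst_of_toFinset_eq hset.symm hc)
    rw [h1.apply_not_mem hx, h2.apply_not_mem hx']

/-- commutation of men-disjoint eliminations. -/
lemma elim_comm (h1 : I.Elim B N₁ L) (h2 : I.Elim B N₂ L')
    (hd : ∀ x ∈ L.map Prod.fst, x ∉ L'.map Prod.fst) :
    ∃ P, I.Elim N₁ P L' ∧ I.Elim N₂ P L := by
  have hd' : ∀ x ∈ L'.map Prod.fst, x ∉ L.map Prod.fst := fun x hx hc => hd x hc hx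
  have e1 : I.ExposedIn N₁ L' := h1.preserves_exposed h2.exposed hd'
  have e2 : I.ExposedIn N₂ L := h2.preserves_exposed h1.exposed hd
  obtain ⟨P, hP⟩ := e1.exists_elim
  obtain ⟨P', hP'⟩ := e2.exists_elim
  have hPP : P' = P := by
    ext x
    by_cases hx : x ∈ L.map Prod.fst
    · obtain ⟨i, rfl⟩ := mem_map_fst.1 hx
      rw [hP'.apply_get i, hP.apply_not_mem (hd _ hx), h1.apply_get i]
    · by_cases hx' : x ∈ L'.map Prod.fst
      · obtain ⟨j, rfl⟩ := mem_map_fst.1 hx'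
        rw [hP.apply_get j, hP'.apply_not_mem hx, h2.apply_get j]
      · rw [hP.apply_not_mem hx', hP'.apply_not_mem hx,
          h1.apply_not_mem hx, h2.apply_not_mem hx']
  subst hPP
  exact ⟨P', hP, hP'⟩



variable {n : ℕ} {I : SMInst n} {M M' B N N₁ N₂ Q C : Fin n ≃ Fin n}
  {L L' K ρ ρ' : List (Fin n × Fin n)} {Ls Ls' Ts Ts' : List (List (Fin n × Fin n))}

/-- the men appearing in some rotation of a list of rotations. -/
def MenIn (Ls : List (List (Fin n × Fin n))) (x : Fin n) : Prop :=
  ∃ K ∈ Ls, x ∈ K.map Prod.fst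

lemma MenIn.nil {x : Fin n} (h : MenIn ([] : List (List (Fin n × Fin n))) x) : False := by
  obtain ⟨K, hK, _⟩ := h; exact List.not_mem_nil hK

lemma menIn_cons {x : Fin n} :
    MenIn (L :: Ls) x ↔ x ∈ L.map Prod.fst ∨ MenIn Ls x := by
  constructor
  · rintro ⟨K, hK, hx⟩
    rcases List.mem_cons.1 hK with rfl | hK
    · exact Or.inl hx
    · exact Or.inr ⟨K, hK, hx⟩
  · rintro (hx | ⟨K, hK, hx⟩)
    · exact ⟨L, List.mem_cons_self, hx⟩
    · exact ⟨K, List.mem_cons_of_mem _ hK, hx⟩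

lemma menIn_append {x : Fin n} :
    MenIn (Ls ++ Ls') x ↔ MenIn Ls x ∨ MenIn Ls' x := by
  constructor
  · rintro ⟨K, hK, hx⟩
    rcases List.mem_append.1 hK with hK | hK
    · exact Or.inl ⟨K, hK, hx⟩
    · exact Or.inr ⟨K, hK, hx⟩
  · rintro (⟨K, hK, hx⟩ | ⟨K, hK, hx⟩)
    · exact ⟨K, List.mem_append.2 (Or.inl hK), hx⟩
    · exact ⟨K, List.mem_append.2 (Or.inr hK), hx⟩

lemma ElimSeq.append (h : I.ElimSeq B Ls M) (h' : I.ElimSeq M Ls' M') :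
    I.ElimSeq B (Ls ++ Ls') M' := by
  induction Ls generalizing B with
  | nil => rw [show M = B from h] at h'; exact h'
  | cons L Ls ih =>
      obtain ⟨Mmid, hstep, hrest⟩ := h
      exact ⟨Mmid, hstep, ih hrest⟩

/-- joining one elimination step against a sequence. -/
lemma step_join (h1 : I.Elim B N L) (hseq : I.ElimSeq B Ls' M) :
    ∃ Q Ts Ts', I.ElimSeq N Ts Q ∧ I.ElimSeq M Ts' Q ∧
      (∀ x, MenIn Ts x → MenIn Ls' x) ∧
      (∀ x, MenIn Ts' x → x ∈ L.map Prod.fst) := by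
  induction Ls' generalizing B N M with
  | nil =>
      rw [show M = B from hseq] at *
      refine ⟨N, [], [L], rfl, ⟨N, h1, rfl⟩, fun x hx => (hx.nil).elim, fun x hx => ?_⟩
      rcases menIn_cons.1 hx with hx | hx
      · exact hx
      · exact hx.nil.elim
  | cons L' rest' ih =>
      obtain ⟨N₂, hstep, hrest⟩ := hseq
      by_cases hset : L.toFinset = L'.toFinset
      · have hNN : N = N₂ := elim_unique h1 hstep hset
        subst hNN
        exact ⟨M, rest', [], hrest, rfl, fun x hx => menIn_cons.2 (Or.inr hx),
          fun x hx => hx.nil.elim⟩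
      · have hd : ∀ x ∈ L.map Prod.fst, x ∉ L'.map Prod.fst := by
          intro x hx hx'
          exact hset (toFinset_eq_of_shared_man h1.exposed hstep.exposed hx hx')
        obtain ⟨P, hNP, hN₂P⟩ := elim_comm h1 hstep hd
        obtain ⟨Q, Ts, Ts', hPQ, hMQ, hTs, hTs'⟩ := ih hN₂P hrest
        refine ⟨Q, L' :: Ts, Ts', ⟨P, hNP, hPQ⟩, hMQ, ?_, hTs'⟩
        intro x hx
        rcases menIn_cons.1 hx with hx | hx
        · exact menIn_cons.2 (Or.inl hx)
        · exact menIn_cons.2 (Or.inr (hTs x hx))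

/-- confluence of elimination sequences from a common matching. -/
lemma seq_join (h : I.ElimSeq B Ls M) (h' : I.ElimSeq B Ls' M') :
    ∃ Q Ts Ts', I.ElimSeq M Ts Q ∧ I.ElimSeq M' Ts' Q ∧
      (∀ x, MenIn Ts x → MenIn Ls' x) ∧
      (∀ x, MenIn Ts' x → MenIn Ls x) := by
  induction Ls generalizing B Ls' M' with
  | nil =>
      rw [show M = B from h] at *
      exact ⟨M', Ls', [], h', rfl, fun x hx => hx, fun x hx => hx.nil.elim⟩
  | cons L rest ih =>
      obtain ⟨N₁, hstep, hrest⟩ := h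
      obtain ⟨Q₀, Ts₀, Ts₀', hN₁Q₀, hM'Q₀, hTs₀, hTs₀'⟩ := step_join hstep h'
      obtain ⟨Q, Ts, Us, hMQ, hQ₀Q, hTs, hUs⟩ := ih hrest hN₁Q₀
      refine ⟨Q, Ts, Ts₀' ++ Us, hMQ, hM'Q₀.append hQ₀Q,
        fun x hx => hTs₀ x (hTs x hx), fun x hx => ?_⟩
      rcases menIn_append.1 hx with hx | hx
      · exact menIn_cons.2 (Or.inl (hTs₀' x hx))
      · exact menIn_cons.2 (Or.inr (hUs x hx))

/-- a rotation avoiding a man `m` stays exposed along a sequence avoiding `m`. -/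
lemma persist_seq {m : Fin n} (hm : m ∈ ρ.map Prod.fst)
    (hE : I.ExposedIn C ρ) (hseq : I.ElimSeq C Ts Q)
    (havoid : ∀ K ∈ Ts, m ∉ K.map Prod.fst) : I.ExposedIn Q ρ := by
  induction Ts generalizing C with
  | nil => rw [show Q = C from hseq]; exact hE
  | cons K rest ih =>
      obtain ⟨Cmid, hstep, hrest⟩ := hseq
      have hd : ∀ x ∈ ρ.map Prod.fst, x ∉ K.map Prod.fst := by
        intro x hx hx'
        have := toFinset_eq_of_shared_man hE hstep.exposed hx hx'
        exact havoid K (List.mem_cons_self) (mem_fst_of_toFinset_eq this hm)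
      exact ih (hstep.preserves_exposed hE hd) hrest
        (fun K' hK' => havoid K' (List.mem_cons_of_mem _ hK'))

/-- the key uniqueness: rotations through a common man, exposed at the ends of two
`m`-avoiding sequences from a common matching, have the same pair set. -/
lemma rotation_unique {m : Fin n}
    (h : I.ElimSeq B Ls M) (h' : I.ElimSeq B Ls' M')
    (hLs : ∀ K ∈ Ls, m ∉ K.map Prod.fst) (hLs' : ∀ K ∈ Ls', m ∉ K.map Prod.fst)
    (hE : I.ExposedIn M ρ) (hm : m ∈ ρ.map Prod.fst)
    (hE' : I.ExposedIn M' ρ') (hm' : m ∈ ρ'.map Prod.fst) :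
    ρ.toFinset = ρ'.toFinset := by
  obtain ⟨Q, Ts, Ts', hMQ, hM'Q, hTs, hTs'⟩ := seq_join h h'
  have havTs : ∀ K ∈ Ts, m ∉ K.map Prod.fst := by
    intro K hK hmK
    obtain ⟨K', hK', hmK'⟩ := hTs m ⟨K, hK, hmK⟩
    exact hLs' K' hK' hmK'
  have havTs' : ∀ K ∈ Ts', m ∉ K.map Prod.fst := by
    intro K hK hmK
    obtain ⟨K', hK', hmK'⟩ := hTs' m ⟨K, hK, hmK⟩
    exact hLs K' hK' hmK'
  have e1 := persist_seq hm hE hMQ havTs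
  have e2 := persist_seq hm' hE' hM'Q havTs'
  exact toFinset_eq_of_shared_man e1 e2 hm hm'

/-- ranks only get worse along a sequence. -/
lemma ElimSeq.rank_le (h : I.ElimSeq B Ls M) (x : Fin n) :
    I.mrank x (B x) ≤ I.mrank x (M x) := by
  induction Ls generalizing B with
  | nil => rw [show M = B from h]
  | cons L rest ih =>
      obtain ⟨Mmid, hstep, hrest⟩ := h
      exact (hstep.rank_le x).trans (ih hrest)

lemma ElimSeq.apply_of_not_menIn (h : I.ElimSeq B Ls M) {x : Fin n}
    (hx : ¬ MenIn Ls x) : M x = B x := by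
  induction Ls generalizing B with
  | nil => rw [show M = B from h]
  | cons L rest ih =>
      obtain ⟨Mmid, hstep, hrest⟩ := h
      rw [ih hrest (fun hc => hx (menIn_cons.2 (Or.inr hc))),
        hstep.apply_not_mem (fun hc => hx (menIn_cons.2 (Or.inl hc)))]

lemma ElimSeq.rank_lt_of_menIn (h : I.ElimSeq B Ls M) {x : Fin n}
    (hx : MenIn Ls x) : I.mrank x (B x) < I.mrank x (M x) := by
  induction Ls generalizing B with
  | nil => exact hx.nil.elim
  | cons L rest ih =>
      obtain ⟨Mmid, hstep, hrest⟩ := h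
      rcases menIn_cons.1 hx with hx | hx
      · exact (hstep.rank_lt hx).trans_le (hrest.rank_le x)
      · exact (hstep.rank_le x).trans_lt (ih hrest hx)

lemma ElimSeq.ne_iff_menIn (h : I.ElimSeq B Ls M) (x : Fin n) :
    M x ≠ B x ↔ MenIn Ls x := by
  constructor
  · intro hne
    by_contra hc
    exact hne (h.apply_of_not_menIn hc)
  · intro hx hc
    exact absurd (congrArg (I.mrank x) hc).symm (h.rank_lt_of_menIn hx).ne

/-- decomposition at the first rotation containing `m`. -/
lemma first_rot (h : I.ElimSeq B Ls M) {m : Fin n} (hm : MenIn Ls m) :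
    ∃ pre ρ C, I.ElimSeq B pre C ∧ I.ExposedIn C ρ ∧ ρ ∈ Ls ∧
      m ∈ ρ.map Prod.fst ∧ ∀ K ∈ pre, m ∉ K.map Prod.fst := by
  induction Ls generalizing B with
  | nil => exact hm.nil.elim
  | cons L rest ih =>
      obtain ⟨N₁, hstep, hrest⟩ := h
      by_cases hmL : m ∈ L.map Prod.fst
      · exact ⟨[], L, B, rfl, hstep.exposed, List.mem_cons_self, hmL,
          fun K hK => (List.not_mem_nil hK).elim⟩
      · have hm' : MenIn rest m := by
          rcases menIn_cons.1 hm with hx | hx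
          · exact absurd hx hmL
          · exact hx
        obtain ⟨pre, ρ, C, hseq, hE, hρ, hmρ, hav⟩ := ih hrest hm'
        refine ⟨L :: pre, ρ, C, ⟨N₁, hstep, hseq⟩, hE, List.mem_cons_of_mem _ hρ, hmρ, ?_⟩
        intro K hK
        rcases List.mem_cons.1 hK with rfl | hK
        · exact hmL
        · exact hav K hK



lemma menOf_iff {S : Finset (Finset (Fin n × Fin n))} {Ls : List (List (Fin n × Fin n))}
    (hset : (Ls.map List.toFinset).toFinset = S) (x : Fin n) :
    x ∈ I.menOf S ↔ MenIn Ls x := by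
  subst hset
  simp only [menOf, Finset.mem_biUnion, Finset.mem_image, List.mem_toFinset,
    List.mem_map, MenIn]
  constructor
  · rintro ⟨R, ⟨K, hK, rfl⟩, p, hp, rfl⟩
    exact ⟨K, hK, p, List.mem_toFinset.1 hp, rfl⟩
  · rintro ⟨K, hK, p, hp, rfl⟩
    exact ⟨K.toFinset, ⟨K, hK, rfl⟩, p, List.mem_toFinset.2 hp, rfl⟩

lemma menOf_mono {S S' : Finset (Finset (Fin n × Fin n))} (h : S ⊆ S') :
    I.menOf S ⊆ I.menOf S' := by
  intro x hx
  obtain ⟨R, hR, hxR⟩ := Finset.mem_biUnion.1 hx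
  exact Finset.mem_biUnion.2 ⟨R, h hR, hxR⟩

end SMInst

/-- if `Mk` and `M` are incomparable stable matchings whose closed subsets
are disjoint, then `d(Mk, M) = |X(Sk)| + |X(S)|`; in particular `d(Mk, M) ≥ |X(S)|`, and
`|X(S)| ≥ d(Mu, M)` for any stable matching `Mu` of a closed subset contained in `S`. -/
theorem incomparable_disjoint_distance {n : ℕ} (I : SMInst n)
    (M₀ : Fin n ≃ Fin n) (hM₀ : I.IsManOptimal M₀)
    (Mk M : Fin n ≃ Fin n) (hMk : I.IsStable Mk) (hM : I.IsStable M)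
    (Sk S : Finset (Finset (Fin n × Fin n))) (hSk : I.IsClosedF Sk) (hS : I.IsClosedF S)
    (hck : I.Corresponds M₀ Sk Mk) (hc : I.Corresponds M₀ S M)
    (hdisj : Disjoint Sk S)
    (hinc₁ : ¬ I.Dominates Mk M) (hinc₂ : ¬ I.Dominates M Mk) :
    I.mdist Mk M = (I.menOf Sk).card + (I.menOf S).card ∧
    (I.menOf S).card ≤ I.mdist Mk M ∧
    ∀ (Su : Finset (Finset (Fin n × Fin n))) (Mu : Fin n ≃ Fin n),
      I.IsClosedF Su → Su ⊆ S → I.IsStable Mu → I.Corresponds M₀ Su Mu →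
      I.mdist Mu M ≤ (I.menOf S).card := by
  classical
  obtain ⟨Lsk, hndk, hsetk, hseqk⟩ := hck
  obtain ⟨Ls, hnd, hset, hseq⟩ := hc
  -- characterizations of changed men
  have hchark : ∀ x : Fin n, Mk x ≠ M₀ x ↔ x ∈ I.menOf Sk := fun x =>
    (hseqk.ne_iff_menIn x).trans (SMInst.menOf_iff hsetk x).symm
  have hchar : ∀ x : Fin n, M x ≠ M₀ x ↔ x ∈ I.menOf S := fun x =>
    (hseq.ne_iff_menIn x).trans (SMInst.menOf_iff hset x).symm
  -- the two sets of men are disjoint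
  have hmendisj : Disjoint (I.menOf Sk) (I.menOf S) := by
    rw [Finset.disjoint_left]
    intro x hxk hx
    have hmk : SMInst.MenIn Lsk x := (SMInst.menOf_iff hsetk x).1 hxk
    have hm : SMInst.MenIn Ls x := (SMInst.menOf_iff hset x).1 hx
    obtain ⟨prek, ρk, Ck, hseqCk, hEk, hρk, hmρk, havk⟩ := SMInst.first_rot hseqk hmk
    obtain ⟨pre, ρ, C, hseqC, hE, hρ, hmρ, hav⟩ := SMInst.first_rot hseq hm
    have heq : ρk.toFinset = ρ.toFinset :=
      SMInst.rotation_unique hseqCk hseqC havk hav hEk hmρk hE hmρ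
    have h1 : ρk.toFinset ∈ Sk := by
      rw [← hsetk]
      exact List.mem_toFinset.2 (List.mem_map.2 ⟨ρk, hρk, rfl⟩)
    have h2 : ρk.toFinset ∈ S := by
      rw [heq, ← hset]
      exact List.mem_toFinset.2 (List.mem_map.2 ⟨ρ, hρ, rfl⟩)
    exact Finset.disjoint_left.1 hdisj h1 h2
  -- the set of men with different partners in Mk and M
  have hfilter : (Finset.univ.filter fun x => Mk x ≠ M x) = I.menOf Sk ∪ I.menOf S := by
    ext x
    simp only [Finset.mem_filter, Finset.mem_univ, true_and, Finset.mem_union]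
    constructor
    · intro hne
      by_contra hc'
      push_neg at hc'
      have e1 : Mk x = M₀ x := by
        by_contra h'; exact hc'.1 ((hchark x).1 h')
      have e2 : M x = M₀ x := by
        by_contra h'; exact hc'.2 ((hchar x).1 h')
      exact hne (e1.trans e2.symm)
    · rintro (hx | hx)
      · have e1 : Mk x ≠ M₀ x := (hchark x).2 hx
        have e2 : M x = M₀ x := by
          by_contra h'
          exact Finset.disjoint_left.1 hmendisj hx ((hchar x).1 h')
        intro hc'; exact e1 (hc' ▸ e2)
      · have e1 : M x ≠ M₀ x := (hchar x).2 hx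
        have e2 : Mk x = M₀ x := by
          by_contra h'
          exact Finset.disjoint_left.1 hmendisj ((hchark x).1 h') hx
        intro hc'; exact e1 (hc' ▸ e2)
  have hmdist : I.mdist Mk M = (I.menOf Sk).card + (I.menOf S).card := by
    show (Finset.univ.filter fun x => Mk x ≠ M x).card = _
    rw [hfilter, Finset.card_union_of_disjoint hmendisj]
  refine ⟨hmdist, by rw [hmdist]; exact Nat.le_add_left _ _, ?_⟩
  intro Su Mu _ hsub _ hcu
  obtain ⟨Lsu, hndu, hsetu, hsequ⟩ := hcu
  have hsubset : (Finset.univ.filter fun x => Mu x ≠ M x) ⊆ I.menOf S := by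
    intro x hx
    rw [Finset.mem_filter] at hx
    by_contra hxS
    have e2 : M x = M₀ x := by
      by_contra h'; exact hxS ((hchar x).1 h')
    have e1 : Mu x = M₀ x := by
      by_contra h'
      have : x ∈ I.menOf Su := ((hsequ.ne_iff_menIn x).1 h').elim
        fun K hK => (SMInst.menOf_iff hsetu x).2 ⟨K, hK⟩
      exact hxS (SMInst.menOf_mono hsub this)
    exact hx.2 (e1.trans e2.symm)
  calc I.mdist Mu M = (Finset.univ.filter fun x => Mu x ≠ M x).card := rfl
    _ ≤ (I.menOf S).card := Finset.card_le_card hsubset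
end

section
/- Closest-repair theorem: let M be a stable matching and (m,w) ∈ M a non-fixed pair (i.e., some stable matching omits it). Define M↑ (if (m,w) ∉ M0, from the closed subset S \ ({ρ_p} ∪ (succ(ρ_p) ∩ S))) and M↓ (if (m,w) ∉ Mz, from S ∪ {ρ_e} ∪ (pred(ρ_e) \ S)). Then a stable matching not containing (m,w) at minimum distance d(·, M) from M is attained by M↑ or M↓; no other stable matching avoiding (m,w) is strictly closer to M than both. -/
namespace SMInst

variable {n : ℕ} (I : SMInst n)

/-- `N` is the "up" repair `M↑` of the matching of `S` for the pair `(m, w)`: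
it corresponds to `S` minus the rotation producing `(m, w)` and its successors in `S`. -/
def IsUpRepair (M₀ : Fin n ≃ Fin n) (S : Finset (Finset (Fin n × Fin n)))
    (m w : Fin n) (N : Fin n ≃ Fin n) : Prop :=
  ∃ (Lp : List (Fin n × Fin n)) (Sup : Finset (Finset (Fin n × Fin n))),
    I.IsRotation Lp ∧ I.Produces Lp m w ∧
    (∀ R, R ∈ Sup ↔ R ∈ S ∧ ¬ (R = Lp.toFinset ∨ I.PrecedesR Lp.toFinset R)) ∧
    I.Corresponds M₀ Sup N

/-- `N` is the "down" repair `M↓` of the matching of `S` for the pair `(m, w)`: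
it corresponds to `S` plus the rotation eliminating `(m, w)` and its missing
predecessors. -/
def IsDownRepair (M₀ : Fin n ≃ Fin n) (S : Finset (Finset (Fin n × Fin n)))
    (m w : Fin n) (N : Fin n ≃ Fin n) : Prop :=
  ∃ (Le : List (Fin n × Fin n)) (Sdn : Finset (Finset (Fin n × Fin n))),
    I.IsRotation Le ∧ (m, w) ∈ Le ∧
    (∀ R, R ∈ Sdn ↔ R ∈ S ∨ R = Le.toFinset ∨ I.PrecedesR R Le.toFinset) ∧
    I.Corresponds M₀ Sdn N

end SMInst

namespace SMInst
variable {n : ℕ}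

section Lattice
variable (I : SMInst n)

lemma manOptimal_unique {A B : Fin n ≃ Fin n} (hA : I.IsManOptimal A)
    (hB : I.IsManOptimal B) : A = B := by
  apply Equiv.ext
  intro m
  exact I.mrank_inj m (le_antisymm (hA.2 B hB.1 m) (hB.2 A hA.1 m))

/-- pointwise "best of two" function on men -/
def pjfun (X Y : Fin n ≃ Fin n) : Fin n → Fin n :=
  fun m => if I.mrank m (X m) ≤ I.mrank m (Y m) then X m else Y m

lemma pjfun_eq_or (X Y : Fin n ≃ Fin n) (m : Fin n) :
    I.pjfun X Y m = X m ∨ I.pjfun X Y m = Y m := by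
  unfold pjfun; split
  · exact Or.inl rfl
  · exact Or.inr rfl

lemma pjfun_le_left (X Y : Fin n ≃ Fin n) (m : Fin n) :
    I.mrank m (I.pjfun X Y m) ≤ I.mrank m (X m) := by
  unfold pjfun; split
  · exact le_refl _
  · omega

lemma pjfun_le_right (X Y : Fin n ≃ Fin n) (m : Fin n) :
    I.mrank m (I.pjfun X Y m) ≤ I.mrank m (Y m) := by
  unfold pjfun; split
  · assumption
  · exact le_refl _

lemma pjfun_inj {X Y : Fin n ≃ Fin n} (hX : I.IsStable X) (hY : I.IsStable Y) :
    Function.Injective (I.pjfun X Y) := by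
  intro m1 m2 h
  by_contra hne
  set v := I.pjfun X Y m2 with hv
  have h1 : I.pjfun X Y m1 = v := h
  -- the two values cannot come from the same side
  have key : ∀ a b : Fin n, a ≠ b → I.pjfun X Y a = X a → I.pjfun X Y b = Y b →
      X a = Y b → False := by
    intro a b hab ha hb hXY
    -- v = X a = Y b
    have hXb : X b ≠ X a := fun hh => hab (X.injective hh).symm
    have hYa : Y a ≠ X a := by
      intro hh
      exact hab (Y.injective (hh.trans hXY))
    -- b prefers v to X b
    have hbv : I.mrank b (Y b) ≤ I.mrank b (X b) := by
      have := I.pjfun_le_left X Y b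
      rw [hb] at this; exact this
    have hbv' : I.mrank b (Y b) < I.mrank b (X b) := by
      rcases lt_or_eq_of_le hbv with h' | h'
      · exact h'
      · exact absurd (I.mrank_inj b h'.symm) (by rw [← hXY]; exact hXb)
    -- a prefers v to Y a
    have hav : I.mrank a (X a) ≤ I.mrank a (Y a) := by
      have := I.pjfun_le_right X Y a
      rw [ha] at this; exact this
    have hav' : I.mrank a (X a) < I.mrank a (Y a) := by
      rcases lt_or_eq_of_le hav with h' | h'
      · exact h'
      · exact absurd (I.mrank_inj a h') hYa.symm
    -- stability of X against (b, X a):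
    have hsymmX : X.symm (X a) = a := X.symm_apply_apply a
    have nb1 : ¬ (I.mrank b (X a) < I.mrank b (X b) ∧
        I.wrank (X a) b < I.wrank (X a) (X.symm (X a))) := hX b (X a)
    rw [hsymmX] at nb1
    push_neg at nb1
    have hw1 : I.wrank (X a) a ≤ I.wrank (X a) b := by
      apply nb1
      rw [hXY]
      exact hbv'
    -- stability of Y against (a, Y b):
    have hsymmY : Y.symm (Y b) = b := Y.symm_apply_apply b
    have nb2 : ¬ (I.mrank a (Y b) < I.mrank a (Y a) ∧
        I.wrank (Y b) a < I.wrank (Y b) (Y.symm (Y b))) := hY a (Y b)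
    rw [hsymmY] at nb2
    push_neg at nb2
    have hw2 : I.wrank (Y b) b ≤ I.wrank (Y b) a := by
      apply nb2
      rw [← hXY]
      exact hav'
    rw [← hXY] at hw2
    have : a = b := I.wrank_inj (X a) (le_antisymm hw1 hw2)
    exact hab this
  rcases I.pjfun_eq_or X Y m1 with e1 | e1 <;> rcases I.pjfun_eq_or X Y m2 with e2 | e2
  · exact hne (X.injective (by rw [← e1, ← e2, h]))
  · exact key m1 m2 hne e1 e2 (by rw [← e1, ← e2, h])
  · exact key m2 m1 (Ne.symm hne) e2 e1 (by rw [← e1, ← e2, h])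
  · exact hne (Y.injective (by rw [← e1, ← e2, h]))

/-- the join (man-optimal combination) of two stable matchings -/
noncomputable def pjoin (X Y : Fin n ≃ Fin n) : Fin n ≃ Fin n :=
  if h : Function.Bijective (I.pjfun X Y) then Equiv.ofBijective _ h else X

lemma pjoin_apply {X Y : Fin n ≃ Fin n} (hX : I.IsStable X) (hY : I.IsStable Y)
    (m : Fin n) : I.pjoin X Y m = I.pjfun X Y m := by
  unfold pjoin
  rw [dif_pos (Finite.injective_iff_bijective.mp (I.pjfun_inj hX hY))]
  rfl

lemma pjoin_symm_ge {X Y : Fin n ≃ Fin n} (hX : I.IsStable X) (hY : I.IsStable Y)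
    (w : Fin n) :
    I.wrank w (X.symm w) ≤ I.wrank w ((I.pjoin X Y).symm w) ∧
    I.wrank w (Y.symm w) ≤ I.wrank w ((I.pjoin X Y).symm w) ∧
    ((I.pjoin X Y).symm w = X.symm w ∨ (I.pjoin X Y).symm w = Y.symm w) := by
  set J := I.pjoin X Y with hJ
  set p := J.symm w with hp
  have hJp : J p = w := J.apply_symm_apply w
  have hor : J p = X p ∨ J p = Y p := by
    rw [I.pjoin_apply hX hY p]; exact I.pjfun_eq_or X Y p
  have hleX : I.mrank p (J p) ≤ I.mrank p (X p) := by
    rw [I.pjoin_apply hX hY p]; exact I.pjfun_le_left X Y p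
  have hleY : I.mrank p (J p) ≤ I.mrank p (Y p) := by
    rw [I.pjoin_apply hX hY p]; exact I.pjfun_le_right X Y p
  -- helper: if w = A p (p is w's A-partner) and p strictly prefers w to B p,
  have helper : ∀ A B : Fin n ≃ Fin n, I.IsStable B → A p = w →
      I.mrank p w ≤ I.mrank p (B p) → I.wrank w (B.symm w) ≤ I.wrank w p := by
    intro A B hBs hAp hpref
    by_cases hq : B.symm w = p
    · rw [hq]
    · by_contra hlt
      push_neg at hlt
      have hBp : B p ≠ w := fun hh => hq (by rw [← hh, B.symm_apply_apply])
      have h1 : I.mrank p w < I.mrank p (B p) := by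
        rcases lt_or_eq_of_le hpref with h' | h'
        · exact h'
        · exact absurd (I.mrank_inj p h').symm hBp
      exact hBs p w ⟨h1, hlt⟩
  rcases hor with he | he
  · have hw : X p = w := by rw [← he]; exact hJp
    have e1 : X.symm w = p := by rw [← hw, X.symm_apply_apply]
    refine ⟨by rw [e1], ?_, Or.inl e1.symm⟩
    have := helper X Y hY (by rw [hw]) (by rw [← hw, ← he]; exact hleY)
    exact this
  · have hw : Y p = w := by rw [← he]; exact hJp
    have e1 : Y.symm w = p := by rw [← hw, Y.symm_apply_apply]
    refine ⟨?_, by rw [e1], Or.inr e1.symm⟩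
    exact helper Y X hX hw (by rw [← hw, ← he]; exact hleX)

lemma pjoin_stable {X Y : Fin n ≃ Fin n} (hX : I.IsStable X) (hY : I.IsStable Y) :
    I.IsStable (I.pjoin X Y) := by
  intro x y hb
  obtain ⟨h1, h2⟩ := hb
  rcases (I.pjoin_symm_ge hX hY y).2.2 with e | e
  · refine hX x y ⟨lt_of_lt_of_le h1 ?_, by rw [← e]; exact h2⟩
    rw [I.pjoin_apply hX hY x]; exact I.pjfun_le_left X Y x
  · refine hY x y ⟨lt_of_lt_of_le h1 ?_, by rw [← e]; exact h2⟩
    rw [I.pjoin_apply hX hY x]; exact I.pjfun_le_right X Y x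

lemma pjoin_dominates_left {X Y : Fin n ≃ Fin n} (hX : I.IsStable X) (hY : I.IsStable Y) :
    I.Dominates (I.pjoin X Y) X := by
  intro m; rw [I.pjoin_apply hX hY m]; exact I.pjfun_le_left X Y m

lemma pjoin_dominates_right {X Y : Fin n ≃ Fin n} (hX : I.IsStable X) (hY : I.IsStable Y) :
    I.Dominates (I.pjoin X Y) Y := by
  intro m; rw [I.pjoin_apply hX hY m]; exact I.pjfun_le_right X Y m

lemma pjoin_eq_or {X Y : Fin n ≃ Fin n} (hX : I.IsStable X) (hY : I.IsStable Y) (m : Fin n) :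
    I.pjoin X Y m = X m ∨ I.pjoin X Y m = Y m := by
  rw [I.pjoin_apply hX hY m]; exact I.pjfun_eq_or X Y m

/-- dual instance: swap the roles of men and women -/
def dual : SMInst n := ⟨I.wrank, I.mrank, I.wrank_inj, I.mrank_inj⟩

@[simp] lemma dual_mrank : I.dual.mrank = I.wrank := rfl
@[simp] lemma dual_wrank : I.dual.wrank = I.mrank := rfl

lemma isStable_dual_symm (M : Fin n ≃ Fin n) :
    I.dual.IsStable M.symm ↔ I.IsStable M := by
  constructor
  · intro h m w hb
    refine h w m ⟨?_, ?_⟩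
    · simpa using hb.2
    · simpa using hb.1
  · intro h w m hb
    refine h m w ⟨?_, ?_⟩
    · simpa using hb.2
    · simpa using hb.1

/-- the meet (man-pessimal combination) of two stable matchings -/
noncomputable def pmeet (X Y : Fin n ≃ Fin n) : Fin n ≃ Fin n :=
  (I.dual.pjoin X.symm Y.symm).symm

lemma pmeet_symm_eq (X Y : Fin n ≃ Fin n) :
    (I.pmeet X Y).symm = I.dual.pjoin X.symm Y.symm := by
  unfold pmeet; simp

lemma pmeet_stable {X Y : Fin n ≃ Fin n} (hX : I.IsStable X) (hY : I.IsStable Y) :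
    I.IsStable (I.pmeet X Y) := by
  rw [← I.isStable_dual_symm, pmeet_symm_eq]
  exact I.dual.pjoin_stable ((I.isStable_dual_symm X).mpr hX) ((I.isStable_dual_symm Y).mpr hY)

lemma pmeet_dominated_left {X Y : Fin n ≃ Fin n} (hX : I.IsStable X) (hY : I.IsStable Y) :
    I.Dominates X (I.pmeet X Y) := by
  intro m
  have := (I.dual.pjoin_symm_ge ((I.isStable_dual_symm X).mpr hX)
    ((I.isStable_dual_symm Y).mpr hY) m).1
  simp only [dual_wrank, Equiv.symm_symm] at this
  rw [show (I.dual.pjoin X.symm Y.symm).symm = I.pmeet X Y from by unfold pmeet; simp] at this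
  exact this

lemma pmeet_dominated_right {X Y : Fin n ≃ Fin n} (hX : I.IsStable X) (hY : I.IsStable Y) :
    I.Dominates Y (I.pmeet X Y) := by
  intro m
  have := (I.dual.pjoin_symm_ge ((I.isStable_dual_symm X).mpr hX)
    ((I.isStable_dual_symm Y).mpr hY) m).2.1
  simp only [dual_wrank, Equiv.symm_symm] at this
  rw [show (I.dual.pjoin X.symm Y.symm).symm = I.pmeet X Y from by unfold pmeet; simp] at this
  exact this

lemma pmeet_eq_or {X Y : Fin n ≃ Fin n} (hX : I.IsStable X) (hY : I.IsStable Y) (m : Fin n) :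
    I.pmeet X Y m = X m ∨ I.pmeet X Y m = Y m := by
  have := (I.dual.pjoin_symm_ge ((I.isStable_dual_symm X).mpr hX)
    ((I.isStable_dual_symm Y).mpr hY) m).2.2
  simp only [Equiv.symm_symm] at this
  rw [show (I.dual.pjoin X.symm Y.symm).symm = I.pmeet X Y from by unfold pmeet; simp] at this
  exact this

/-- women-side of the meet: each woman gets the better of her two partners -/
lemma pmeet_symm_le {X Y : Fin n ≃ Fin n} (hX : I.IsStable X) (hY : I.IsStable Y) (w : Fin n) :
    I.wrank w ((I.pmeet X Y).symm w) ≤ I.wrank w (X.symm w) ∧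
    I.wrank w ((I.pmeet X Y).symm w) ≤ I.wrank w (Y.symm w) := by
  have hXd := (I.isStable_dual_symm X).mpr hX
  have hYd := (I.isStable_dual_symm Y).mpr hY
  rw [pmeet_symm_eq]
  constructor
  · have := I.dual.pjoin_dominates_left hXd hYd w
    simpa using this
  · have := I.dual.pjoin_dominates_right hXd hYd w
    simpa using this

end Lattice

section ElimBasic

/-- successor index in a cyclic list -/
def rnxt (L : List (Fin n × Fin n)) (i : Fin L.length) : Fin L.length :=
  ⟨(i.1 + 1) % L.length, Nat.mod_lt _ i.pos⟩

lemma rnxt_inj (L : List (Fin n × Fin n)) {i j : Fin L.length}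
    (h : rnxt L i = rnxt L j) : i = j := by
  have hi := i.2; have hj := j.2
  have h' : (i.1 + 1) % L.length = (j.1 + 1) % L.length := congrArg Fin.val h
  have e1 : (i.1 + 1) % L.length = if i.1 + 1 = L.length then 0 else i.1 + 1 := by
    split
    · simp [*]
    · exact Nat.mod_eq_of_lt (by omega)
  have e2 : (j.1 + 1) % L.length = if j.1 + 1 = L.length then 0 else j.1 + 1 := by
    split
    · simp [*]
    · exact Nat.mod_eq_of_lt (by omega)
  apply Fin.ext
  rw [e1, e2] at h'
  split at h' <;> split at h' <;> omega

lemma rnxt_surj (L : List (Fin n × Fin n)) (j : Fin L.length) :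
    ∃ i, rnxt L i = j := by
  have hj := j.2
  by_cases h0 : j.1 = 0
  · refine ⟨⟨L.length - 1, by omega⟩, ?_⟩
    apply Fin.ext
    show (L.length - 1 + 1) % L.length = j.1
    rw [Nat.sub_add_cancel (by omega), Nat.mod_self, h0]
  · refine ⟨⟨j.1 - 1, by omega⟩, ?_⟩
    apply Fin.ext
    show (j.1 - 1 + 1) % L.length = j.1
    rw [Nat.sub_add_cancel (by omega), Nat.mod_eq_of_lt hj]

lemma get_fst_inj {L : List (Fin n × Fin n)} (hnd : (L.map Prod.fst).Nodup)
    {i j : Fin L.length} (h : (L.get i).1 = (L.get j).1) : i = j := by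
  apply Fin.ext
  have hi : i.1 < (L.map Prod.fst).length := by simpa using i.2
  have hj : j.1 < (L.map Prod.fst).length := by simpa using j.2
  refine (List.Nodup.getElem_inj_iff hnd (hi := hi) (hj := hj)).mp ?_
  simp only [List.getElem_map]
  simpa using h

variable (I : SMInst n)

lemma mem_map_fst_iff {L : List (Fin n × Fin n)} {m : Fin n} :
    m ∈ L.map Prod.fst ↔ ∃ i : Fin L.length, (L.get i).1 = m := by
  rw [List.mem_map]
  constructor
  · rintro ⟨p, hp, rfl⟩
    obtain ⟨i, hi⟩ := List.get_of_mem hp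
    exact ⟨i, by rw [hi]⟩
  · rintro ⟨i, rfl⟩
    exact ⟨L.get i, List.get_mem _ _, rfl⟩

lemma mem_map_snd_iff {L : List (Fin n × Fin n)} {v : Fin n} :
    v ∈ L.map Prod.snd ↔ ∃ i : Fin L.length, (L.get i).2 = v := by
  rw [List.mem_map]
  constructor
  · rintro ⟨p, hp, rfl⟩
    obtain ⟨i, hi⟩ := List.get_of_mem hp
    exact ⟨i, by rw [hi]⟩
  · rintro ⟨i, rfl⟩
    exact ⟨L.get i, List.get_mem _ _, rfl⟩

variable {I}

lemma ExposedIn.matched {P : Fin n ≃ Fin n} {L : List (Fin n × Fin n)}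
    (h : I.ExposedIn P L) (i : Fin L.length) : P (L.get i).1 = (L.get i).2 :=
  h.2.2.1 _ (List.get_mem _ _)

lemma ExposedIn.bullet1 {P : Fin n ≃ Fin n} {L : List (Fin n × Fin n)}
    (h : I.ExposedIn P L) (i : Fin L.length) :
    I.mrank (L.get i).1 (L.get i).2 < I.mrank (L.get i).1 (L.get (rnxt L i)).2 :=
  (h.2.2.2 i).1

lemma ExposedIn.bullet2 {P : Fin n ≃ Fin n} {L : List (Fin n × Fin n)}
    (h : I.ExposedIn P L) (i : Fin L.length) :
    I.wrank (L.get (rnxt L i)).2 (L.get i).1 <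
      I.wrank (L.get (rnxt L i)).2 (L.get (rnxt L i)).1 :=
  (h.2.2.2 i).2.1

lemma ExposedIn.bullet3 {P : Fin n ≃ Fin n} {L : List (Fin n × Fin n)}
    (h : I.ExposedIn P L) (i : Fin L.length) (w : Fin n)
    (h1 : I.mrank (L.get i).1 (L.get i).2 < I.mrank (L.get i).1 w)
    (h2 : I.mrank (L.get i).1 w < I.mrank (L.get i).1 (L.get (rnxt L i)).2) :
    ¬ I.wrank w (L.get i).1 < I.wrank w (P.symm w) :=
  (h.2.2.2 i).2.2 w h1 h2

lemma Elim.get_eq {P Q : Fin n ≃ Fin n} {L : List (Fin n × Fin n)}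
    (h : I.Elim P Q L) (i : Fin L.length) :
    Q (L.get i).1 = (L.get (rnxt L i)).2 := h.2.1 i

lemma Elim.symm_get_s15 {P Q : Fin n ≃ Fin n} {L : List (Fin n × Fin n)}
    (h : I.Elim P Q L) (i : Fin L.length) :
    Q.symm (L.get (rnxt L i)).2 = (L.get i).1 := by
  rw [← h.get_eq i, Q.symm_apply_apply]

lemma Elim.not_mem_eq {P Q : Fin n ≃ Fin n} {L : List (Fin n × Fin n)}
    (h : I.Elim P Q L) {m : Fin n} (hm : m ∉ L.map Prod.fst) : Q m = P m := h.2.2 m hm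

lemma Elim.symm_not_mem_s15 {P Q : Fin n ≃ Fin n} {L : List (Fin n × Fin n)}
    (h : I.Elim P Q L) {v : Fin n} (hv : v ∉ L.map Prod.snd) :
    Q.symm v = P.symm v := by
  set x := Q.symm v with hx
  have hQx : Q x = v := Q.apply_symm_apply v
  by_cases hmem : x ∈ L.map Prod.fst
  · obtain ⟨i, hi⟩ := mem_map_fst_iff.mp hmem
    exfalso
    apply hv
    rw [mem_map_snd_iff]
    exact ⟨rnxt L i, by rw [← h.get_eq i, hi, hQx]⟩
  · have : P x = v := by rw [← h.not_mem_eq hmem, hQx]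
    rw [← this, P.symm_apply_apply]

lemma Elim.unique {P Q Q' : Fin n ≃ Fin n} {L : List (Fin n × Fin n)}
    (h : I.Elim P Q L) (h' : I.Elim P Q' L) : Q = Q' := by
  apply Equiv.ext
  intro m
  by_cases hm : m ∈ L.map Prod.fst
  · obtain ⟨i, rfl⟩ := mem_map_fst_iff.mp hm
    rw [h.get_eq i, h'.get_eq i]
  · rw [h.not_mem_eq hm, h'.not_mem_eq hm]

lemma elim_exists {P : Fin n ≃ Fin n} {L : List (Fin n × Fin n)}
    (hexp : I.ExposedIn P L) : ∃ Q, I.Elim P Q L := by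
  classical
  set f : Fin n → Fin n := fun m =>
    if h : ∃ i : Fin L.length, (L.get i).1 = m
    then (L.get (rnxt L h.choose)).2 else P m with hf
  have hnd := hexp.2.1
  have hval : ∀ (i : Fin L.length), f (L.get i).1 = (L.get (rnxt L i)).2 := by
    intro i
    have hex : ∃ j : Fin L.length, (L.get j).1 = (L.get i).1 := ⟨i, rfl⟩
    have : hex.choose = i := get_fst_inj hnd hex.choose_spec
    simp only [hf, dif_pos hex, this]
  have hinj : Function.Injective f := by
    intro m1 m2 he
    by_cases h1 : ∃ i : Fin L.length, (L.get i).1 = m1 <;>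
      by_cases h2 : ∃ i : Fin L.length, (L.get i).1 = m2
    · obtain ⟨i1, e1⟩ := h1; obtain ⟨i2, e2⟩ := h2
      rw [← e1, ← e2, hval i1, hval i2] at he
      rw [← e1, ← e2]
      have he' : P (L.get (rnxt L i1)).1 = P (L.get (rnxt L i2)).1 := by
        rw [hexp.matched, hexp.matched, he]
      have := rnxt_inj L (get_fst_inj hnd (P.injective he'))
      rw [this]
    · obtain ⟨i1, e1⟩ := h1
      exfalso
      rw [← e1, hval i1] at he
      simp only [hf, dif_neg h2] at he
      have : P (L.get (rnxt L i1)).1 = P m2 := by rw [hexp.matched, he]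
      exact h2 ⟨rnxt L i1, P.injective this⟩
    · obtain ⟨i2, e2⟩ := h2
      exfalso
      rw [← e2, hval i2] at he
      simp only [hf, dif_neg h1] at he
      have : P m1 = P (L.get (rnxt L i2)).1 := by rw [hexp.matched, he]
      exact h1 ⟨rnxt L i2, (P.injective this).symm⟩
    · simp only [hf, dif_neg h1, dif_neg h2] at he
      exact P.injective he
  set Q := Equiv.ofBijective f (Finite.injective_iff_bijective.mp hinj) with hQ
  have hQval : ∀ m, Q m = f m := fun m => rfl
  refine ⟨Q, hexp, ?_, ?_⟩
  · intro i; rw [hQval, hval i]; rfl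
  · intro m hm
    rw [hQval]
    simp only [hf]
    rw [dif_neg]
    intro ⟨i, hi⟩
    exact hm (mem_map_fst_iff.mpr ⟨i, hi⟩)

/-- men weakly worsen under an elimination -/
lemma Elim.mono {P Q : Fin n ≃ Fin n} {L : List (Fin n × Fin n)}
    (h : I.Elim P Q L) (m : Fin n) : I.mrank m (P m) ≤ I.mrank m (Q m) := by
  by_cases hm : m ∈ L.map Prod.fst
  · obtain ⟨i, rfl⟩ := mem_map_fst_iff.mp hm
    rw [h.get_eq i, h.1.matched i]
    exact le_of_lt (h.1.bullet1 i)
  · rw [h.not_mem_eq hm]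

/-- men of the rotation strictly worsen -/
lemma Elim.strict {P Q : Fin n ≃ Fin n} {L : List (Fin n × Fin n)}
    (h : I.Elim P Q L) (i : Fin L.length) :
    I.mrank (L.get i).1 (P (L.get i).1) < I.mrank (L.get i).1 (Q (L.get i).1) := by
  rw [h.get_eq i, h.1.matched i]
  exact h.1.bullet1 i

/-- women weakly improve under an elimination -/
lemma Elim.women_mono {P Q : Fin n ≃ Fin n} {L : List (Fin n × Fin n)}
    (h : I.Elim P Q L) (v : Fin n) : I.wrank v (Q.symm v) ≤ I.wrank v (P.symm v) := by
  by_cases hv : v ∈ L.map Prod.snd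
  · obtain ⟨j, hj⟩ := mem_map_snd_iff.mp hv
    obtain ⟨i, hi⟩ := rnxt_surj L j
    subst hj
    rw [← hi, h.symm_get_s15 i]
    have : P.symm (L.get (rnxt L i)).2 = (L.get (rnxt L i)).1 := by
      rw [← h.1.matched (rnxt L i), P.symm_apply_apply]
    rw [this]
    exact le_of_lt (h.1.bullet2 i)
  · rw [h.symm_not_mem_s15 hv]

/-- elimination of an exposed rotation preserves stability -/
lemma Elim.stable {P Q : Fin n ≃ Fin n} {L : List (Fin n × Fin n)}
    (h : I.Elim P Q L) (hP : I.IsStable P) : I.IsStable Q := by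
  intro x y hb
  obtain ⟨h1, h2⟩ := hb
  -- y prefers x to her P-partner
  have h2' : I.wrank y x < I.wrank y (P.symm y) :=
    lt_of_lt_of_le h2 (h.women_mono y)
  by_cases hx : x ∈ L.map Prod.fst
  · obtain ⟨i, rfl⟩ := mem_map_fst_iff.mp hx
    set x := (L.get i).1
    have hc : P x = (L.get i).2 := h.1.matched i
    rcases lt_trichotomy (I.mrank x y) (I.mrank x (P x)) with hlt | heq | hgt
    · exact hP x y ⟨hlt, h2'⟩
    · have : y = P x := I.mrank_inj x heq
      rw [this, P.symm_apply_apply] at h2'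
      exact absurd h2' (lt_irrefl _)
    · rw [hc] at hgt
      rw [h.get_eq i] at h1
      exact h.1.bullet3 i y hgt h1 h2'
  · rw [h.not_mem_eq hx] at h1
    exact hP x y ⟨h1, h2'⟩

end ElimBasic

section Seq
variable {I : SMInst n}

lemma ElimSeq.stable_end {P Q : Fin n ≃ Fin n} {Ls : List (List (Fin n × Fin n))}
    (h : I.ElimSeq P Ls Q) (hP : I.IsStable P) : I.IsStable Q := by
  induction Ls generalizing P with
  | nil => exact (show Q = P from h) ▸ hP
  | cons K rest ih =>
    obtain ⟨Mid, hE, hs⟩ := h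
    exact ih hs (hE.stable hP)

lemma ElimSeq.mono {P Q : Fin n ≃ Fin n} {Ls : List (List (Fin n × Fin n))}
    (h : I.ElimSeq P Ls Q) (m : Fin n) : I.mrank m (P m) ≤ I.mrank m (Q m) := by
  induction Ls generalizing P with
  | nil => rw [show Q = P from h]
  | cons K rest ih =>
    obtain ⟨Mid, hE, hs⟩ := h
    exact le_trans (hE.mono m) (ih hs)

lemma ElimSeq.append' {P R Q : Fin n ≃ Fin n} {Ls1 Ls2 : List (List (Fin n × Fin n))}
    (h1 : I.ElimSeq P Ls1 R) (h2 : I.ElimSeq R Ls2 Q) :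
    I.ElimSeq P (Ls1 ++ Ls2) Q := by
  induction Ls1 generalizing P with
  | nil => rw [show R = P from h1] at h2; exact h2
  | cons K rest ih =>
    obtain ⟨Mid, hE, hs⟩ := h1
    exact ⟨Mid, hE, ih hs⟩

lemma ElimSeq.split {P Q : Fin n ≃ Fin n} {Ls : List (List (Fin n × Fin n))}
    (h : I.ElimSeq P Ls Q) {K : List (Fin n × Fin n)} (hK : K ∈ Ls) :
    ∃ (Ls1 Ls2 : List (List (Fin n × Fin n))) (R R' : Fin n ≃ Fin n),
      Ls = Ls1 ++ K :: Ls2 ∧ I.ElimSeq P Ls1 R ∧ I.Elim R R' K ∧ I.ElimSeq R' Ls2 Q := by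
  induction Ls generalizing P with
  | nil => exact absurd hK List.not_mem_nil
  | cons K0 rest ih =>
    obtain ⟨Mid, hE, hs⟩ := h
    rcases List.mem_cons.mp hK with rfl | hmem
    · exact ⟨[], rest, P, Mid, rfl, rfl, hE, hs⟩
    · obtain ⟨Ls1, Ls2, R, R', e, s1, s2, s3⟩ := ih hs hmem
      exact ⟨K0 :: Ls1, Ls2, R, R', by rw [e]; rfl, ⟨Mid, hE, s1⟩, s2, s3⟩

/-- `(a,b)` is a pair of some stable matching -/
def IsStablePair (I : SMInst n) (a b : Fin n) : Prop :=
  ∃ X, I.IsStable X ∧ X a = b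

/-- key "no skipping" lemma: an exposed rotation cannot move a man from above a
stable partner `b` to strictly below `b`; it must pass through exactly `b`. -/
lemma no_skip {P : Fin n ≃ Fin n} {L : List (Fin n × Fin n)}
    (hP : I.IsStable P) (hexp : I.ExposedIn P L) (i : Fin L.length) {b : Fin n}
    (hSP : I.IsStablePair (L.get i).1 b)
    (h1 : I.mrank (L.get i).1 (L.get i).2 ≤ I.mrank (L.get i).1 b)
    (h2 : I.mrank (L.get i).1 b < I.mrank (L.get i).1 (L.get (rnxt L i)).2) :
    (L.get i).2 = b := by
  by_contra hne
  obtain ⟨X, hX, hXa⟩ := hSP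
  set a := (L.get i).1
  set c := (L.get i).2
  have h1' : I.mrank a c < I.mrank a b := by
    rcases lt_or_eq_of_le h1 with h' | h'
    · exact h'
    · exact absurd (I.mrank_inj a h') hne
  -- b prefers her P-partner to a
  have hb3 := hexp.bullet3 i b h1' h2
  push_neg at hb3
  have hPb : P.symm b ≠ a := by
    intro hh
    have : P a = c := hexp.matched i
    rw [← hh, P.apply_symm_apply] at this
    exact hne this.symm
  have hb3' : I.wrank b (P.symm b) < I.wrank b a := by
    rcases lt_or_eq_of_le hb3 with h' | h'
    · exact h'
    · exact absurd (I.wrank_inj b h') hPb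
  -- meet of X and P
  set U := I.pmeet X P with hU
  have hUa : U a = b := by
    rcases I.pmeet_eq_or hX hP a with e | e
    · rw [e, hXa]
    · exfalso
      have := I.pmeet_dominated_left hX hP a
      rw [e, hXa] at this
      rw [hexp.matched i] at this
      exact absurd (lt_of_le_of_lt this h1') (lt_irrefl _)
  have hUb : U.symm b = a := by rw [← hUa, U.symm_apply_apply]
  have := (I.pmeet_symm_le hX hP b).2
  rw [hUb] at this
  exact absurd (lt_of_le_of_lt this hb3') (lt_irrefl _)

/-- crossing lemma: if a man moves from (weakly above) a stable partner `b` to strictly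
below `b` along an elimination sequence, some eliminated rotation contains `(a, b)`. -/
lemma ElimSeq.cross {P Q : Fin n ≃ Fin n} {Ls : List (List (Fin n × Fin n))}
    (h : I.ElimSeq P Ls Q) (hP : I.IsStable P) {a b : Fin n}
    (hSP : I.IsStablePair a b)
    (h1 : I.mrank a (P a) ≤ I.mrank a b) (h2 : I.mrank a b < I.mrank a (Q a)) :
    ∃ K ∈ Ls, (a, b) ∈ K := by
  induction Ls generalizing P with
  | nil =>
    rw [show Q = P from h] at h2
    exact absurd (lt_of_le_of_lt h1 h2) (lt_irrefl _)
  | cons K0 rest ih =>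
    obtain ⟨Mid, hE, hs⟩ := h
    by_cases hm : I.mrank a (Mid a) ≤ I.mrank a b
    · obtain ⟨K, hK, hmem⟩ := ih hs (hE.stable hP) hm
      exact ⟨K, List.mem_cons_of_mem _ hK, hmem⟩
    · push_neg at hm
      have hmoved : a ∈ K0.map Prod.fst := by
        by_contra hnm
        rw [hE.not_mem_eq hnm] at hm
        exact absurd (lt_of_le_of_lt h1 hm) (lt_irrefl _)
      obtain ⟨i, hi⟩ := mem_map_fst_iff.mp hmoved
      have hc : I.mrank (K0.get i).1 (K0.get i).2 ≤ I.mrank (K0.get i).1 b := by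
        rw [hi, ← hE.1.matched i, hi]
        exact h1
      have hn : I.mrank (K0.get i).1 b < I.mrank (K0.get i).1 (K0.get (rnxt K0 i)).2 := by
        rw [hi, ← hE.get_eq i, hi]
        exact hm
      have := no_skip hP hE.1 i (by rw [hi]; exact hSP) hc hn
      refine ⟨K0, List.mem_cons_self, ?_⟩
      have : K0.get i = (a, b) := Prod.ext hi this
      rw [← this]
      exact List.get_mem _ _

/-- arrival lemma: if a man starts strictly above a stable partner `b` and ends
weakly below it, some eliminated rotation produces `(a, b)`. -/
lemma ElimSeq.arrive {P Q : Fin n ≃ Fin n} {Ls : List (List (Fin n × Fin n))}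
    (h : I.ElimSeq P Ls Q) (hP : I.IsStable P) {a b : Fin n}
    (hSP : I.IsStablePair a b)
    (h1 : I.mrank a (P a) < I.mrank a b) (h2 : I.mrank a b ≤ I.mrank a (Q a)) :
    ∃ K ∈ Ls, I.Produces K a b := by
  induction Ls generalizing P with
  | nil =>
    rw [show Q = P from h] at h2
    exact absurd (lt_of_lt_of_le h1 h2) (lt_irrefl _)
  | cons K0 rest ih =>
    obtain ⟨Mid, hE, hs⟩ := h
    by_cases hm : I.mrank a (Mid a) < I.mrank a b
    · obtain ⟨K, hK, hmem⟩ := ih hs (hE.stable hP) hm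
      exact ⟨K, List.mem_cons_of_mem _ hK, hmem⟩
    · push_neg at hm
      have hmoved : a ∈ K0.map Prod.fst := by
        by_contra hnm
        rw [hE.not_mem_eq hnm] at hm
        exact absurd (lt_of_lt_of_le h1 hm) (lt_irrefl _)
      obtain ⟨i, hi⟩ := mem_map_fst_iff.mp hmoved
      rcases lt_or_eq_of_le hm with hlt | heq
      · -- would skip b: impossible
        exfalso
        have hc : I.mrank (K0.get i).1 (K0.get i).2 ≤ I.mrank (K0.get i).1 b := by
          rw [hi, ← hE.1.matched i, hi]
          exact le_of_lt h1
        have hn : I.mrank (K0.get i).1 b < I.mrank (K0.get i).1 (K0.get (rnxt K0 i)).2 := by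
          rw [hi, ← hE.get_eq i, hi]
          exact hlt
        have hthis := no_skip hP hE.1 i (by rw [hi]; exact hSP) hc hn
        have hPa : P a = b := by
          rw [← hthis, ← hi]; exact hE.1.matched i
        rw [hPa] at h1
        exact lt_irrefl _ h1
      · -- arrives exactly at b
        have hb : (K0.get (rnxt K0 i)).2 = b := by
          apply I.mrank_inj a
          have e : (K0.get (rnxt K0 i)).2 = Mid a := by rw [← hi]; exact (hE.get_eq i).symm
          rw [e, ← heq]
        exact ⟨K0, List.mem_cons_self, ⟨i, hi, hb⟩⟩

/-- along an elimination sequence from a stable matching, the eliminated rotations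
have pairwise distinct sets of pairs -/
lemma ElimSeq.nodup_finsets {P Q : Fin n ≃ Fin n} {Ls : List (List (Fin n × Fin n))}
    (h : I.ElimSeq P Ls Q) (hP : I.IsStable P) :
    (Ls.map List.toFinset).Nodup := by
  induction Ls generalizing P with
  | nil => simp
  | cons K0 rest ih =>
    obtain ⟨Mid, hE, hs⟩ := h
    rw [List.map_cons, List.nodup_cons]
    refine ⟨?_, ih hs (hE.stable hP)⟩
    intro hmem
    obtain ⟨K', hK', hKe⟩ := List.mem_map.mp hmem
    -- K0 has a pair (a, b); after the step, a is strictly below b forever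
    have hlen := hE.1.1
    have hpos : 0 < K0.length := by omega
    set i0 : Fin K0.length := ⟨0, hpos⟩
    set a := (K0.get i0).1
    set b := (K0.get i0).2
    have hstep : I.mrank a b < I.mrank a (Mid a) := by
      have := hE.strict i0
      rw [hE.1.matched i0] at this
      exact this
    -- split rest at K'
    obtain ⟨Ls1, Ls2, R, R', he, s1, s2, s3⟩ := hs.split hK'
    have hmono : I.mrank a (Mid a) ≤ I.mrank a (R a) := s1.mono a
    -- (a, b) ∈ K' so R a = b
    have hab : (a, b) ∈ K' := by
      have : (a, b) ∈ K'.toFinset := by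
        rw [hKe, List.mem_toFinset]
        have : K0.get i0 = (a, b) := rfl
        rw [← this]
        exact List.get_mem _ _
      exact List.mem_toFinset.mp this
    have : R a = b := s2.1.2.2.1 (a, b) hab
    rw [this] at hmono
    exact absurd (lt_of_lt_of_le hstep hmono) (lt_irrefl _)

end Seq

section Unique
variable {I : SMInst n}

/-- auxiliary: the successor woman on one side is not strictly better than on the other -/
lemma succ_women_aux {P P' : Fin n ≃ Fin n} {K K' : List (Fin n × Fin n)}
    (hP : I.IsStable P) (hK : I.ExposedIn P K)
    (hP' : I.IsStable P') (hK' : I.ExposedIn P' K')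
    {i : Fin K.length} {i' : Fin K'.length} (hpair : K.get i = K'.get i') :
    ¬ I.mrank (K.get i).1 (K.get (rnxt K i)).2 <
        I.mrank (K.get i).1 (K'.get (rnxt K' i')).2 := by
  intro hlt
  set a := (K.get i).1 with ha
  set b := (K.get i).2 with hb
  have ha' : (K'.get i').1 = a := by rw [← hpair]
  have hb' : (K'.get i').2 = b := by rw [← hpair]
  set w1 := (K.get (rnxt K i)).2 with hw1
  set w1' := (K'.get (rnxt K' i')).2 with hw1'
  have hb1 : I.mrank a b < I.mrank a w1 := hK.bullet1 i
  have hb1' : I.mrank a b < I.mrank a w1' := by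
    have := hK'.bullet1 i'
    rw [ha', hb'] at this
    exact this
  -- K'-minimality at i' rejects w1
  have hrej := hK'.bullet3 i' w1 (by rw [ha', hb']; exact hb1) (by rw [ha']; exact hlt)
  rw [ha'] at hrej
  push_neg at hrej
  set q := P'.symm w1 with hq
  have hbw1 : b ≠ w1 := fun h => absurd (h ▸ hb1) (lt_irrefl _)
  have hqa : q ≠ a := by
    intro h
    have : P' a = b := by rw [← ha', ← hb']; exact hK'.matched i'
    rw [← h, P'.apply_symm_apply] at this
    exact hbw1 this.symm
  have hrej' : I.wrank w1 q < I.wrank w1 a := by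
    rcases lt_or_eq_of_le hrej with h' | h'
    · exact h'
    · exact absurd (I.wrank_inj w1 h') hqa
  -- the next man in K
  set p := (K.get (rnxt K i)).1 with hp
  have hKb2 : I.wrank w1 a < I.wrank w1 p := hK.bullet2 i
  -- eliminate K from P
  obtain ⟨Q, hQ⟩ := elim_exists hK
  have hQs : I.IsStable Q := hQ.stable hP
  have hQa : Q a = w1 := hQ.get_eq i
  have hQsymm : Q.symm w1 = a := by rw [← hQa, Q.symm_apply_apply]
  have hqa2 : q ≠ a := hqa
  have hP'q : P' q = w1 := P'.apply_symm_apply w1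
  rcases lt_trichotomy (I.mrank q (Q q)) (I.mrank q w1) with hc | hc | hc
  · -- meet of Q and P' maps both a and q to w1
    have hmeet := I.pmeet_stable hQs hP'
    have hUq : I.pmeet Q P' q = w1 := by
      rcases I.pmeet_eq_or hQs hP' q with e | e
      · exfalso
        have := I.pmeet_dominated_right hQs hP' q
        rw [e, hP'q] at this
        exact absurd (lt_of_le_of_lt this hc) (lt_irrefl _)
      · rw [e, hP'q]
    have hUa : I.pmeet Q P' a = w1 := by
      rcases I.pmeet_eq_or hQs hP' a with e | e
      · rw [e, hQa]
      · exfalso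
        have h1 := I.pmeet_dominated_left hQs hP' a
        rw [e, hQa] at h1
        have hP'a : P' a = b := by rw [← ha', ← hb']; exact hK'.matched i'
        rw [hP'a] at h1
        exact absurd (lt_of_le_of_lt h1 hb1) (lt_irrefl _)
    exact hqa ((I.pmeet Q P').injective (hUq.trans hUa.symm))
  · -- equal ranks: q = a
    have : Q q = w1 := I.mrank_inj q hc
    rw [← this, Q.symm_apply_apply] at hQsymm
    exact hqa hQsymm
  · -- (q, w1) blocks Q
    refine hQs q w1 ⟨hc, ?_⟩
    rw [hQsymm]
    exact hrej'

/-- auxiliary: the successor man on one side is not preferred by the successor woman -/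
lemma succ_men_aux {P P' : Fin n ≃ Fin n} {K K' : List (Fin n × Fin n)}
    (hP : I.IsStable P) (hK : I.ExposedIn P K)
    (hP' : I.IsStable P') (hK' : I.ExposedIn P' K')
    {i : Fin K.length} {i' : Fin K'.length} (hpair : K.get i = K'.get i')
    (hww : (K.get (rnxt K i)).2 = (K'.get (rnxt K' i')).2) :
    ¬ I.wrank (K.get (rnxt K i)).2 (K.get (rnxt K i)).1 <
        I.wrank (K.get (rnxt K i)).2 (K'.get (rnxt K' i')).1 := by
  intro hlt
  set a := (K.get i).1 with ha
  set b := (K.get i).2 with hb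
  have ha' : (K'.get i').1 = a := by rw [← hpair]
  have hb' : (K'.get i').2 = b := by rw [← hpair]
  set w1 := (K.get (rnxt K i)).2 with hw1
  set p := (K.get (rnxt K i)).1 with hp
  set q' := (K'.get (rnxt K' i')).1 with hq'
  have hb1 : I.mrank a b < I.mrank a w1 := hK.bullet1 i
  have hPp : P p = w1 := hK.matched (rnxt K i)
  have hP'q' : P' q' = w1 := by
    have := hK'.matched (rnxt K' i')
    rw [← hww] at this
    exact this
  have hpq : p ≠ q' := fun h => absurd (h ▸ hlt) (lt_irrefl _)
  have hap : a ≠ p := by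
    intro h
    have hb2 : I.wrank w1 a < I.wrank w1 p := hK.bullet2 i
    rw [h] at hb2
    exact absurd hb2 (lt_irrefl _)
  have hb2' : I.wrank w1 a < I.wrank w1 q' := by
    have := hK'.bullet2 i'
    rw [ha', ← hww] at this
    exact this
  -- p strictly prefers his P'-partner to w1
  have hP'symm : P'.symm w1 = q' := by rw [← hP'q', P'.symm_apply_apply]
  have hP'p_ne : P' p ≠ w1 := by
    intro h
    rw [← h, P'.symm_apply_apply] at hP'symm
    exact hpq hP'symm
  have hpf : I.mrank p (P' p) < I.mrank p w1 := by
    by_contra hge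
    push_neg at hge
    have : I.mrank p w1 < I.mrank p (P' p) := by
      rcases lt_or_eq_of_le hge with h' | h'
      · exact h'
      · exact absurd (I.mrank_inj p h'.symm) hP'p_ne
    exact hP' p w1 ⟨this, by rw [hP'symm]; exact hlt⟩
  -- eliminate K' from P'
  obtain ⟨Q', hQ'⟩ := elim_exists hK'
  have hQ's : I.IsStable Q' := hQ'.stable hP'
  have hQ'a : Q' a = w1 := by
    have := hQ'.get_eq i'
    rw [ha', ← hww] at this
    exact this
  have hQ'symm : Q'.symm w1 = a := by rw [← hQ'a, Q'.symm_apply_apply]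
  -- meet of Q' and P
  have hUa : I.pmeet Q' P a = w1 := by
    rcases I.pmeet_eq_or hQ's hP a with e | e
    · rw [e, hQ'a]
    · exfalso
      have h1 := I.pmeet_dominated_left hQ's hP a
      rw [e, hQ'a, hK.matched i] at h1
      exact absurd (lt_of_le_of_lt h1 hb1) (lt_irrefl _)
  have hUp_ne : I.pmeet Q' P p ≠ w1 := by
    intro h
    exact hap ((I.pmeet Q' P).injective (hUa.trans h.symm))
  have hUp : I.pmeet Q' P p = Q' p := by
    rcases I.pmeet_eq_or hQ's hP p with e | e
    · exact e
    · exfalso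
      rw [e, hPp] at hUp_ne
      exact hUp_ne rfl
  have hQ'p_ne : Q' p ≠ w1 := by
    intro h
    rw [← h, Q'.symm_apply_apply] at hQ'symm
    exact hap hQ'symm.symm
  have hQ'p_gt : I.mrank p w1 < I.mrank p (Q' p) := by
    have h1 := I.pmeet_dominated_right hQ's hP p
    rw [hUp, hPp] at h1
    rcases lt_or_eq_of_le h1 with h' | h'
    · exact h'
    · exact absurd (I.mrank_inj p h'.symm) hQ'p_ne
  -- p must be a man of K'
  by_cases hmem : p ∈ K'.map Prod.fst
  · obtain ⟨j', hj'⟩ := mem_map_fst_iff.mp hmem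
    have hf : (K'.get j').2 = P' p := by rw [← hj']; exact (hK'.matched j').symm
    have hg : (K'.get (rnxt K' j')).2 = Q' p := by rw [← hj']; exact (hQ'.get_eq j').symm
    have hbet1 : I.mrank (K'.get j').1 (K'.get j').2 < I.mrank (K'.get j').1 w1 := by
      rw [hj', hf]; exact hpf
    have hbet2 : I.mrank (K'.get j').1 w1 < I.mrank (K'.get j').1 (K'.get (rnxt K' j')).2 := by
      rw [hj', hg]; exact hQ'p_gt
    have := hK'.bullet3 j' w1 hbet1 hbet2
    rw [hj', hP'symm] at this
    push_neg at this
    exact absurd (lt_of_lt_of_le hlt this) (lt_irrefl _)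
  · have : Q' p = P' p := hQ'.not_mem_eq hmem
    rw [this] at hQ'p_gt
    exact absurd (lt_trans hpf hQ'p_gt) (lt_irrefl _)

/-- successor agreement: two exposed rotations sharing a pair have the same successor pair -/
lemma succ_agree {P P' : Fin n ≃ Fin n} {K K' : List (Fin n × Fin n)}
    (hP : I.IsStable P) (hK : I.ExposedIn P K)
    (hP' : I.IsStable P') (hK' : I.ExposedIn P' K')
    {i : Fin K.length} {i' : Fin K'.length} (hpair : K.get i = K'.get i') :
    K.get (rnxt K i) = K'.get (rnxt K' i') := by
  have hww : (K.get (rnxt K i)).2 = (K'.get (rnxt K' i')).2 := by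
    have h1 := succ_women_aux hP hK hP' hK' hpair
    have h2 := succ_women_aux hP' hK' hP hK hpair.symm
    rw [show (K'.get i').1 = (K.get i).1 from by rw [← hpair]] at h2
    apply I.mrank_inj (K.get i).1
    omega
  have hmm : (K.get (rnxt K i)).1 = (K'.get (rnxt K' i')).1 := by
    have h1 := succ_men_aux hP hK hP' hK' hpair hww
    have h2 := succ_men_aux hP' hK' hP hK hpair.symm hww.symm
    rw [← hww] at h2
    apply I.wrank_inj (K.get (rnxt K i)).2
    omega
  exact Prod.ext hmm hww

lemma rnxt_iterate_val (K : List (Fin n × Fin n)) (i : Fin K.length) (k : ℕ) :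
    ((rnxt K)^[k] i).1 = (i.1 + k) % K.length := by
  induction k with
  | zero => simp [Nat.mod_eq_of_lt i.2]
  | succ k ih =>
    rw [Function.iterate_succ_apply']
    show (((rnxt K)^[k] i).1 + 1) % K.length = _
    rw [ih, Nat.mod_add_mod, ← Nat.add_assoc]

lemma rnxt_iterate_surj (K : List (Fin n × Fin n)) (i j : Fin K.length) :
    ∃ k, (rnxt K)^[k] i = j := by
  refine ⟨j.1 + K.length - i.1, ?_⟩
  apply Fin.ext
  rw [rnxt_iterate_val]
  have hi := i.2; have hj := j.2
  have : i.1 + (j.1 + K.length - i.1) = j.1 + K.length := by omega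
  rw [this, Nat.add_mod_right, Nat.mod_eq_of_lt hj]

/-- a pair belongs to at most one rotation (as sets of pairs) -/
lemma rot_unique {P P' : Fin n ≃ Fin n} {K K' : List (Fin n × Fin n)}
    (hP : I.IsStable P) (hK : I.ExposedIn P K)
    (hP' : I.IsStable P') (hK' : I.ExposedIn P' K')
    {p0 : Fin n × Fin n} (h1 : p0 ∈ K) (h2 : p0 ∈ K') :
    K.toFinset = K'.toFinset := by
  obtain ⟨i, hi⟩ := List.get_of_mem h1
  obtain ⟨i', hi'⟩ := List.get_of_mem h2
  have hpair : K.get i = K'.get i' := by rw [hi, hi']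
  have key : ∀ k : ℕ, K.get ((rnxt K)^[k] i) = K'.get ((rnxt K')^[k] i') := by
    intro k
    induction k with
    | zero => exact hpair
    | succ k ih =>
      rw [Function.iterate_succ_apply', Function.iterate_succ_apply']
      exact succ_agree hP hK hP' hK' ih
  apply Finset.Subset.antisymm
  · intro p hp
    obtain ⟨j, hj⟩ := List.get_of_mem (List.mem_toFinset.mp hp)
    obtain ⟨k, hk⟩ := rnxt_iterate_surj K i j
    rw [List.mem_toFinset, ← hj, ← hk, key k]
    exact List.get_mem _ _
  · intro p hp
    obtain ⟨j, hj⟩ := List.get_of_mem (List.mem_toFinset.mp hp)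
    obtain ⟨k, hk⟩ := rnxt_iterate_surj K' i' j
    rw [List.mem_toFinset, ← hj, ← hk, ← key k]
    exact List.get_mem _ _

/-- a pair is produced by at most one rotation (as sets of pairs) -/
lemma produces_unique {P P' : Fin n ≃ Fin n} {K K' : List (Fin n × Fin n)}
    (hP : I.IsStable P) (hK : I.ExposedIn P K)
    (hP' : I.IsStable P') (hK' : I.ExposedIn P' K')
    {a w : Fin n} (h1 : I.Produces K a w) (h2 : I.Produces K' a w) :
    K.toFinset = K'.toFinset := by
  obtain ⟨i, hi1, hi2⟩ := h1
  obtain ⟨i', hi1', hi2'⟩ := h2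
  have hi2 : (K.get (rnxt K i)).2 = w := hi2
  have hi2' : (K'.get (rnxt K' i')).2 = w := hi2'
  -- claim : ¬ mrank a c < mrank a c' (and symmetric)
  have claim : ∀ (R R' : Fin n ≃ Fin n) (L L' : List (Fin n × Fin n)),
      I.IsStable R → I.ExposedIn R L → I.IsStable R' → I.ExposedIn R' L' →
      ∀ (j : Fin L.length) (j' : Fin L'.length),
      (L.get j).1 = a → (L'.get j').1 = a →
      (L.get (rnxt L j)).2 = w → (L'.get (rnxt L' j')).2 = w →
      ¬ I.mrank a (L.get j).2 < I.mrank a (L'.get j').2 := by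
    intro R R' L L' hR hL hR' hL' j j' hj hj' hw hw' hlt
    set d := (L.get j).2 with hd
    set d' := (L'.get j').2 with hd'
    have hb1 : I.mrank a d < I.mrank a w := by
      have := hL.bullet1 j
      rw [hj, hw] at this
      exact this
    have hb1' : I.mrank a d' < I.mrank a w := by
      have := hL'.bullet1 j'
      rw [hj', hw'] at this
      exact this
    -- bullet3 of L at j with woman d'
    have hrej := hL.bullet3 j d' (by rw [hj]; exact hlt) (by rw [hj, hw]; exact hb1')
    rw [hj] at hrej
    push_neg at hrej
    set x := R.symm d' with hx
    have hRa : R a = d := by rw [← hj, hd]; exact hL.matched j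
    have hR'a : R' a = d' := by rw [← hj', hd']; exact hL'.matched j'
    have hdd' : d ≠ d' := fun h => absurd (h ▸ hlt) (lt_irrefl _)
    have hxa : x ≠ a := by
      intro h
      apply hdd'
      rw [← hRa, ← h]
      exact R.apply_symm_apply d'
    have hrej' : I.wrank d' x < I.wrank d' a := by
      rcases lt_or_eq_of_le hrej with h' | h'
      · exact h'
      · exact absurd (I.wrank_inj d' h') hxa
    -- join of R and R'
    have hJa : I.pjoin R R' a = d := by
      rcases I.pjoin_eq_or hR hR' a with e | e
      · rw [e, hRa]
      · exfalso
        have h1 := I.pjoin_dominates_left hR hR' a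
        rw [e, hR'a, hRa] at h1
        exact absurd (lt_of_lt_of_le hlt h1) (lt_irrefl _)
    have hsg := I.pjoin_symm_ge hR hR' d'
    have hR'symm : R'.symm d' = a := by rw [← hR'a, R'.symm_apply_apply]
    rcases hsg.2.2 with e | e
    · -- J.symm d' = x : contradiction with woman's preference
      have h2 := hsg.2.1
      rw [e, hR'symm] at h2
      exact absurd (lt_of_le_of_lt h2 hrej') (lt_irrefl _)
    · -- J.symm d' = a : then J a = d'
      rw [hR'symm] at e
      have : I.pjoin R R' a = d' := by rw [← e]; exact (I.pjoin R R').apply_symm_apply d'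
      rw [hJa] at this
      exact hdd' this
  have n1 := claim P P' K K' hP hK hP' hK' i i' hi1 hi1' hi2 hi2'
  have n2 := claim P' P K' K hP' hK' hP hK i' i hi1' hi1 hi2' hi2
  have hcc : (K.get i).2 = (K'.get i').2 := I.mrank_inj a (by omega)
  have hpair : K.get i = K'.get i' := Prod.ext (by rw [hi1, hi1']) hcc
  exact rot_unique hP hK hP' hK' (List.get_mem K i) (hpair ▸ List.get_mem K' i')

/-- exposure transfers between rotation lists with the same set of pairs -/
lemma exposed_transfer {P P'' : Fin n ≃ Fin n} {K L : List (Fin n × Fin n)}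
    (hP : I.IsStable P) (hK : I.ExposedIn P K)
    (hP'' : I.IsStable P'') (hLr : I.ExposedIn P'' L)
    (hfin : L.toFinset = K.toFinset) : I.ExposedIn P L := by
  have hmatch : ∀ p ∈ L, P p.1 = p.2 := by
    intro p hp
    exact hK.2.2.1 p (List.mem_toFinset.mp (hfin ▸ List.mem_toFinset.mpr hp))
  refine ⟨hLr.1, hLr.2.1, hmatch, ?_⟩
  intro j
  have hjmem : L.get j ∈ K := by
    have : L.get j ∈ L.toFinset := List.mem_toFinset.mpr (List.get_mem _ _)
    rw [hfin] at this
    exact List.mem_toFinset.mp this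
  obtain ⟨ij, hij⟩ := List.get_of_mem hjmem
  have hsucc : L.get (rnxt L j) = K.get (rnxt K ij) :=
    succ_agree hP'' hLr hP hK hij.symm
  refine ⟨?_, ?_, ?_⟩
  · show I.mrank (L.get j).1 (L.get j).2 < I.mrank (L.get j).1 (L.get (rnxt L j)).2
    rw [← hij, hsucc]
    exact hK.bullet1 ij
  · show I.wrank (L.get (rnxt L j)).2 (L.get j).1 <
      I.wrank (L.get (rnxt L j)).2 (L.get (rnxt L j)).1
    rw [← hij, hsucc]
    exact hK.bullet2 ij
  · intro w h1 h2
    show ¬ I.wrank w (L.get j).1 < I.wrank w (P.symm w)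
    have h1' : I.mrank (K.get ij).1 (K.get ij).2 < I.mrank (K.get ij).1 w := by
      rw [hij]; exact h1
    have h2' : I.mrank (K.get ij).1 w < I.mrank (K.get ij).1 (K.get (rnxt K ij)).2 := by
      rw [hij, ← hsucc]; exact h2
    have := hK.bullet3 ij w h1' h2'
    rw [hij] at this
    exact this

end Unique

section Reach
variable {I : SMInst n}

/-- women weakly prefer a dominated stable matching -/
lemma women_prefer {X Y : Fin n ≃ Fin n} (hX : I.IsStable X) (hY : I.IsStable Y)
    (hdom : I.Dominates X Y) (w : Fin n) :
    I.wrank w (Y.symm w) ≤ I.wrank w (X.symm w) := by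
  have hmeet : I.pmeet X Y = Y := by
    apply Equiv.ext; intro m
    rcases I.pmeet_eq_or hX hY m with e | e
    · have h1 := I.pmeet_dominated_right hX hY m
      rw [e] at h1
      rw [e, I.mrank_inj m (le_antisymm (hdom m) h1)]
    · exact e
  have := (I.pmeet_symm_le hX hY w).1
  rw [hmeet] at this
  exact this

/-- from a stable matching strictly dominating another, some rotation is exposed whose
elimination stays weakly above the lower matching -/
lemma step_exposed {X Y : Fin n ≃ Fin n} (hX : I.IsStable X) (hY : I.IsStable Y)
    (hdom : I.Dominates X Y) (hne : ∃ m, X m ≠ Y m) :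
    ∃ L Q, I.Elim X Q L ∧ I.Dominates Q Y := by
  classical
  set Sc : Fin n → Finset (Fin n) := fun m =>
    Finset.univ.filter (fun v => I.mrank m (X m) < I.mrank m v ∧
      I.wrank v m < I.wrank v (X.symm v)) with hSc
  have hSc_spec : ∀ m v, v ∈ Sc m ↔ (I.mrank m (X m) < I.mrank m v ∧
      I.wrank v m < I.wrank v (X.symm v)) := by
    intro m v; simp [hSc]
  have hYmem : ∀ m, X m ≠ Y m → Y m ∈ Sc m := by
    intro m hm
    rw [hSc_spec]
    constructor
    · rcases lt_or_eq_of_le (hdom m) with h' | h'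
      · exact h'
      · exact absurd (I.mrank_inj m h') hm
    · have h1 := women_prefer hX hY hdom (Y m)
      rw [Y.symm_apply_apply] at h1
      have hne2 : X.symm (Y m) ≠ m := fun h =>
        hm ((congrArg X h).symm.trans (X.apply_symm_apply (Y m)))
      rcases lt_or_eq_of_le h1 with h' | h'
      · exact h'
      · exact absurd (I.wrank_inj (Y m) h').symm hne2
  have hsel : ∀ m, X m ≠ Y m → ∃ v, v ∈ Sc m ∧ ∀ v' ∈ Sc m, I.mrank m v ≤ I.mrank m v' := by
    intro m hm
    obtain ⟨v, hv1, hv2⟩ := (Sc m).exists_min_image (I.mrank m) ⟨Y m, hYmem m hm⟩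
    exact ⟨v, hv1, hv2⟩
  set g : Fin n → Fin n := fun m =>
    if h : X m ≠ Y m then X.symm (Classical.choose (hsel m h)) else m with hg
  have hgspec : ∀ m, (h : X m ≠ Y m) → X (g m) ∈ Sc m ∧
      ∀ v' ∈ Sc m, I.mrank m (X (g m)) ≤ I.mrank m v' := by
    intro m h
    have hcs := Classical.choose_spec (hsel m h)
    have : g m = X.symm (Classical.choose (hsel m h)) := by rw [hg]; simp [h]
    rw [this, X.apply_symm_apply]
    exact hcs
  -- g maps the disagreement set into itself
  have hD : ∀ m, X m ≠ Y m → X (g m) ≠ Y (g m) := by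
    intro m hm hcon
    obtain ⟨hmem, hmin⟩ := hgspec m hm
    rw [hSc_spec] at hmem
    set v := X (g m) with hv
    have hsv : X.symm v = g m := X.symm_apply_apply (g m) ▸ rfl
    by_cases hvy : v = Y m
    · -- then g m = m, impossible since v ≠ X m
      have : g m = m := by
        apply Y.injective
        rw [← hcon, hvy]
      rw [this] at hv
      exact absurd hmem.1 (by rw [← hv]; exact lt_irrefl _)
    · -- (m, v) blocks Y
      have hvrank : I.mrank m v < I.mrank m (Y m) := by
        have := hmin (Y m) (hYmem m hm)
        rcases lt_or_eq_of_le this with h' | h'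
        · exact h'
        · exact absurd (I.mrank_inj m h') hvy
      have hYsymm : Y.symm v = g m := by rw [hcon, Y.symm_apply_apply]
      refine hY m v ⟨hvrank, ?_⟩
      rw [hYsymm, ← hsv]
      exact hmem.2
  have hgne : ∀ m, X m ≠ Y m → g m ≠ m := by
    intro m hm hcon
    obtain ⟨hmem, _⟩ := hgspec m hm
    rw [hSc_spec] at hmem
    rw [hcon] at hmem
    exact absurd hmem.1 (lt_irrefl _)
  obtain ⟨m0, hm0⟩ := hne
  have hiter : ∀ k, X (g^[k] m0) ≠ Y (g^[k] m0) := by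
    intro k
    induction k with
    | zero => exact hm0
    | succ k ih =>
      rw [Function.iterate_succ_apply']
      exact hD _ ih
  -- find a periodic point of g
  obtain ⟨k1, k2, hkne, hke⟩ :=
    Finite.exists_ne_map_eq_of_infinite (fun k : ℕ => g^[k] m0)
  have hperiodic : ∃ t, g^[t] m0 ∈ Function.periodicPts g := by
    rcases Nat.lt_or_ge k1 k2 with h | h
    · refine ⟨k1, k2 - k1, by omega, ?_⟩
      show g^[k2-k1] (g^[k1] m0) = g^[k1] m0
      rw [← Function.iterate_add_apply]
      rw [show k2 - k1 + k1 = k2 from by omega]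
      exact hke.symm
    · have h' : k2 < k1 := by
        rcases Nat.lt_or_ge k2 k1 with h2 | h2
        · exact h2
        · omega
      refine ⟨k2, k1 - k2, by omega, ?_⟩
      show g^[k1-k2] (g^[k2] m0) = g^[k2] m0
      rw [← Function.iterate_add_apply]
      rw [show k1 - k2 + k2 = k1 from by omega]
      exact hke
  obtain ⟨t, hyp⟩ := hperiodic
  set y := g^[t] m0 with hy
  set p := Function.minimalPeriod g y with hp
  have hppos : 0 < p := Function.minimalPeriod_pos_of_mem_periodicPts hyp
  have hper : g^[p] y = y := Function.iterate_minimalPeriod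
  have hinj : Set.InjOn (fun k => g^[k] y) (Set.Iio p) :=
    Function.iterate_injOn_Iio_minimalPeriod
  have hDall : ∀ k, X (g^[k] y) ≠ Y (g^[k] y) := by
    intro k
    rw [hy, ← Function.iterate_add_apply]
    exact hiter _
  have hp2 : 2 ≤ p := by
    by_contra hlt2
    push_neg at hlt2
    have hp1 : p = 1 := by omega
    have hgy : g y = y := by
      have := hper
      rw [hp1] at this
      simpa using this
    exact hgne y (by simpa using hDall 0) hgy
  -- the rotation list
  set L : List (Fin n × Fin n) :=
    (List.range p).map (fun k => (g^[k] y, X (g^[k] y))) with hL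
  have hlen : L.length = p := by simp [hL]
  have hgetv : ∀ (k : ℕ) (hk : k < L.length), L.get ⟨k, hk⟩ = (g^[k] y, X (g^[k] y)) := by
    intro k hk
    simp [hL, List.get_eq_getElem]
  have hget : ∀ j : Fin L.length, L.get j = (g^[j.1] y, X (g^[j.1] y)) := fun j => hgetv j.1 j.2
  have hmodeq : ∀ k : ℕ, k % L.length = k % p := by intro k; rw [hlen]
  have hget1 : ∀ j : Fin L.length,
      L.get (rnxt L j) = (g^[(j.1 + 1) % p] y, X (g^[(j.1 + 1) % p] y)) := by
    intro j
    calc L.get (rnxt L j)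
        = (g^[(j.1 + 1) % L.length] y, X (g^[(j.1 + 1) % L.length] y)) :=
          hgetv ((j.1 + 1) % L.length) (Nat.mod_lt _ j.pos)
      _ = (g^[(j.1 + 1) % p] y, X (g^[(j.1 + 1) % p] y)) := by rw [hmodeq]
  have hsucc : ∀ j : Fin L.length, g^[(j.1 + 1) % p] y = g (g^[j.1] y) := by
    intro j
    have hj : j.1 < p := by rw [← hlen]; exact j.2
    by_cases hj1 : j.1 + 1 = p
    · rw [hj1, Nat.mod_self]
      show y = g (g^[j.1] y)
      have h2 : g^[j.1 + 1] y = y := by rw [hj1]; exact hper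
      calc y = g^[j.1 + 1] y := h2.symm
        _ = g (g^[j.1] y) := Function.iterate_succ_apply' g _ y
    · rw [Nat.mod_eq_of_lt (by omega)]
      exact Function.iterate_succ_apply' g j.1 y
  have hXg : ∀ k, X (g (g^[k] y)) ∈ Sc (g^[k] y) ∧
      ∀ v' ∈ Sc (g^[k] y), I.mrank (g^[k] y) (X (g (g^[k] y))) ≤ I.mrank (g^[k] y) v' :=
    fun k => hgspec _ (hDall k)
  have hexp : I.ExposedIn X L := by
    refine ⟨by rw [hlen]; exact hp2, ?_, ?_, ?_⟩
    · -- nodup men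
      have : L.map Prod.fst = (List.range p).map (fun k => g^[k] y) := by
        rw [hL, List.map_map]
        rfl
      rw [this]
      refine List.Nodup.map_on ?_ List.nodup_range
      intro a ha b hb hab
      exact hinj (by simpa using List.mem_range.mp ha) (by simpa using List.mem_range.mp hb) hab
    · intro pr hpr
      rw [hL] at hpr
      obtain ⟨k, _, rfl⟩ := List.mem_map.mp hpr
      rfl
    · intro i
      have e0 : L.get i = (g^[i.1] y, X (g^[i.1] y)) := hget i
      have e1 : L.get (rnxt L i) = (g^[(i.1 + 1) % p] y, X (g^[(i.1 + 1) % p] y)) :=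
        hget1 i
      have e2 : (L.get (rnxt L i)).2 = X (g (g^[i.1] y)) := by
        rw [e1, hsucc i]
      have hmem := (hXg i.1).1
      rw [hSc_spec] at hmem
      refine ⟨?_, ?_, ?_⟩
      · show I.mrank (L.get i).1 (L.get i).2 < I.mrank (L.get i).1 (L.get (rnxt L i)).2
        rw [e0, e2]
        exact hmem.1
      · show I.wrank (L.get (rnxt L i)).2 (L.get i).1 <
          I.wrank (L.get (rnxt L i)).2 (L.get (rnxt L i)).1
        rw [e2, e0, e1]
        have h2 := hmem.2
        rw [X.symm_apply_apply] at h2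
        rw [hsucc i]
        exact h2
      · intro w h1 h2
        show ¬ I.wrank w (L.get i).1 < I.wrank w (X.symm w)
        have h2a : I.mrank (L.get i).1 w <
            I.mrank (L.get i).1 ((L.get (rnxt L i)).2) := h2
        rw [e0] at h1 h2a ⊢
        rw [e2] at h2a
        intro hcon
        have hwmem : w ∈ Sc (g^[i.1] y) := by
          rw [hSc_spec]
          exact ⟨h1, hcon⟩
        have := (hXg i.1).2 w hwmem
        exact absurd (lt_of_le_of_lt this h2a) (lt_irrefl _)
  obtain ⟨Q, hQ⟩ := elim_exists hexp
  refine ⟨L, Q, hQ, ?_⟩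
  intro m
  by_cases hm : m ∈ L.map Prod.fst
  · obtain ⟨i, hi⟩ := mem_map_fst_iff.mp hm
    have e1 : Q m = (L.get (rnxt L i)).2 := by rw [← hi]; exact hQ.get_eq i
    have e0 : L.get i = (g^[i.1] y, X (g^[i.1] y)) := hget i
    have hmi : m = g^[i.1] y := by rw [← hi, e0]
    have e2 : (L.get (rnxt L i)).2 = X (g (g^[i.1] y)) := by
      rw [hget1 i, hsucc i]
    rw [e1, e2, hmi]
    exact (hXg i.1).2 (Y (g^[i.1] y)) (hYmem _ (hDall i.1))
  · rw [hQ.not_mem_eq hm]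
    exact hdom m

/-- reachability: a stable matching can be transformed into any stable matching it
dominates by a sequence of rotation eliminations -/
lemma reach {Y : Fin n ≃ Fin n} (hY : I.IsStable Y) :
    ∀ (μ : ℕ) (X : Fin n ≃ Fin n), I.IsStable X → I.Dominates X Y →
    (∑ m, (I.mrank m (Y m) - I.mrank m (X m))) = μ → ∃ Ls, I.ElimSeq X Ls Y := by
  intro μ
  induction μ using Nat.strong_induction_on with
  | _ μ ih =>
    intro X hX hdom hμ
    by_cases hne : ∃ m, X m ≠ Y m
    · obtain ⟨L, Q, hE, hQdom⟩ := step_exposed hX hY hdom hne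
      have hQs : I.IsStable Q := hE.stable hX
      have hstrict : ∃ m, I.mrank m (X m) < I.mrank m (Q m) := by
        have hlen := hE.1.1
        have hpos : 0 < L.length := by omega
        exact ⟨(L.get ⟨0, hpos⟩).1, hE.strict ⟨0, hpos⟩⟩
      have hlt : (∑ m, (I.mrank m (Y m) - I.mrank m (Q m))) < μ := by
        rw [← hμ]
        apply Finset.sum_lt_sum
        · intro i _
          have h1 := hE.mono i
          have h2 := hQdom i
          omega
        · obtain ⟨m, hm⟩ := hstrict
          refine ⟨m, Finset.mem_univ m, ?_⟩
          have h2 := hQdom m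
          omega
      obtain ⟨Ls, hLs⟩ := ih _ hlt Q hQs hQdom rfl
      exact ⟨L :: Ls, Q, hE, hLs⟩
    · push_neg at hne
      refine ⟨[], ?_⟩
      show Y = X
      exact (Equiv.ext hne).symm

lemma reach' {X Y : Fin n ≃ Fin n} (hX : I.IsStable X) (hY : I.IsStable Y)
    (hdom : I.Dominates X Y) : ∃ Ls, I.ElimSeq X Ls Y :=
  reach hY _ X hX hdom rfl

end Reach

section Helpers
variable {I : SMInst n}

lemma ElimSeq.single {P Q : Fin n ≃ Fin n} {K : List (Fin n × Fin n)}
    (h : I.Elim P Q K) : I.ElimSeq P [K] Q := ⟨Q, h, rfl⟩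

/-- a rotation with the same pair set as a producing rotation also produces the pair -/
lemma produces_transfer {PK RLp : Fin n ≃ Fin n} {K Lp : List (Fin n × Fin n)}
    (hPK : I.IsStable PK) (hexpK : I.ExposedIn PK K)
    (hRLp : I.IsStable RLp) (hexpLp : I.ExposedIn RLp Lp)
    (hfin : K.toFinset = Lp.toFinset) {m w : Fin n}
    (hprod : I.Produces Lp m w) : I.Produces K m w := by
  obtain ⟨iLp, h1, h2⟩ := hprod
  have hmem : Lp.get iLp ∈ K := by
    rw [← List.mem_toFinset, hfin, List.mem_toFinset]
    exact List.get_mem _ _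
  obtain ⟨iK, hiK⟩ := List.get_of_mem hmem
  have hsucc : K.get (rnxt K iK) = Lp.get (rnxt Lp iLp) :=
    succ_agree hPK hexpK hRLp hexpLp hiK
  refine ⟨iK, ?_, ?_⟩
  · rw [hiK]; exact h1
  · show (K.get (rnxt K iK)).2 = w
    rw [hsucc]; exact h2

/-- if a rotation producing `(m, w)` is eliminated along a sequence, the endpoint has
`m` at or below `w` -/
lemma produces_rank {P Z : Fin n ≃ Fin n} {Qs : List (List (Fin n × Fin n))}
    (hseq : I.ElimSeq P Qs Z) {K : List (Fin n × Fin n)} (hK : K ∈ Qs)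
    {m w : Fin n} (hprod : I.Produces K m w) :
    I.mrank m w ≤ I.mrank m (Z m) := by
  obtain ⟨Ls1, Ls2, R, R', he, s1, s2, s3⟩ := hseq.split hK
  obtain ⟨i, h1, h2⟩ := hprod
  have h2' : (K.get (rnxt K i)).2 = w := h2
  have : R' m = w := by
    rw [← h1, s2.get_eq i, h2']
  rw [← this]
  exact s3.mono m

/-- distance comparison via pointwise agreement transfer -/
lemma mdist_le_of_agree {M J Z : Fin n ≃ Fin n}
    (h : ∀ x, M x = Z x → J x = M x) : I.mdist M J ≤ I.mdist M Z := by
  apply Finset.card_le_card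
  intro x hx
  rw [Finset.mem_filter] at hx ⊢
  refine ⟨Finset.mem_univ x, ?_⟩
  intro he
  exact hx.2 (h x he).symm

end Helpers

section MainUp
variable {I : SMInst n}

lemma up_repair_main {M₀ M Jup : Fin n ≃ Fin n} {S : Finset (Finset (Fin n × Fin n))}
    {m w : Fin n}
    (hM₀ : I.IsManOptimal M₀) (hM : I.IsStable M)
    (hc : I.Corresponds M₀ S M) (hmw : M m = w)
    (hJs : I.IsStable Jup) (hJdom : I.Dominates Jup M)
    (hJm : I.mrank m (Jup m) < I.mrank m w)
    (hworst : ∀ Z : Fin n ≃ Fin n, I.IsStable Z → I.Dominates Z M →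
      I.mrank m (Z m) < I.mrank m w → I.Dominates Z Jup) :
    I.IsUpRepair M₀ S m w Jup := by
  classical
  obtain ⟨Ls, hnodupS, hsetS, hseqS⟩ := hc
  obtain ⟨hM₀s, hM₀dom⟩ := hM₀
  have hSmem : ∀ R, R ∈ S ↔ ∃ K ∈ Ls, K.toFinset = R := by
    intro R
    rw [← hsetS, List.mem_toFinset, List.mem_map]
  have hM₀m : I.mrank m (M₀ m) < I.mrank m w :=
    lt_of_le_of_lt (hM₀dom Jup hJs m) hJm
  have hSP : I.IsStablePair m w := ⟨M, hM, hmw⟩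
  have hMm : I.mrank m w ≤ I.mrank m (M m) := by rw [hmw]
  obtain ⟨Lp, hLpLs, hLpprod⟩ := hseqS.arrive hM₀s hSP hM₀m hMm
  obtain ⟨Ls1, Ls2, RLp, RLp', heLs, hseq1, hELp, hseq2⟩ := hseqS.split hLpLs
  have hRLps : I.IsStable RLp := hseq1.stable_end hM₀s
  have hexpLp : I.ExposedIn RLp Lp := hELp.1
  have hLprot : I.IsRotation Lp := ⟨RLp, hRLps, hexpLp⟩
  obtain ⟨Qs, hQs⟩ := reach' hM₀s hJs (hM₀dom Jup hJs)
  have hLpnot : ∀ K ∈ Qs, K.toFinset ≠ Lp.toFinset := by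
    intro K hK hfin
    obtain ⟨Qs1, Qs2, PK, PK', heQs, t1, t2, t3⟩ := hQs.split hK
    have hPKs : I.IsStable PK := t1.stable_end hM₀s
    have hprodK : I.Produces K m w :=
      produces_transfer hPKs t2.1 hRLps hexpLp hfin hLpprod
    have := produces_rank hQs hK hprodK
    exact absurd (lt_of_le_of_lt this hJm) (lt_irrefl _)
  refine ⟨Lp, (Qs.map List.toFinset).toFinset, hLprot, hLpprod, ?_,
    Qs, hQs.nodup_finsets hM₀s, rfl, hQs⟩
  intro R
  rw [List.mem_toFinset, List.mem_map]
  constructor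
  · rintro ⟨K, hKQs, rfl⟩
    obtain ⟨Qs1, Qs2, PK, PK', heQs, t1, t2, t3⟩ := hQs.split hKQs
    have hPKs : I.IsStable PK := t1.stable_end hM₀s
    have hpos : 0 < K.length := by have := t2.1.1; omega
    set i0 : Fin K.length := ⟨0, hpos⟩
    set a := (K.get i0).1 with ha
    set b := (K.get i0).2 with hb
    have habK : (a, b) ∈ K := by
      have h : K.get i0 = (a, b) := rfl
      rw [← h]; exact List.get_mem _ _
    have hSPab : I.IsStablePair a b := ⟨PK, hPKs, t2.1.matched i0⟩
    have hJa : I.mrank a b < I.mrank a (Jup a) := by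
      have h1 := t2.strict i0
      rw [t2.1.matched i0] at h1
      exact lt_of_lt_of_le h1 (t3.mono a)
    have hM₀a : I.mrank a (M₀ a) ≤ I.mrank a b := by
      have h := hM₀dom PK hPKs a
      rw [t2.1.matched i0] at h
      exact h
    constructor
    · have hMa : I.mrank a b < I.mrank a (M a) := lt_of_lt_of_le hJa (hJdom a)
      obtain ⟨K2, hK2, hab2⟩ := hseqS.cross hM₀s hSPab hM₀a hMa
      obtain ⟨Us1, Us2, PK2, PK2', _, u1, u2, _⟩ := hseqS.split hK2
      have hPK2s : I.IsStable PK2 := u1.stable_end hM₀s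
      have hfin : K.toFinset = K2.toFinset :=
        rot_unique hPKs t2.1 hPK2s u2.1 habK hab2
      rw [hSmem]
      exact ⟨K2, hK2, hfin.symm⟩
    · rintro (hfin | hprec)
      · exact hLpnot K hKQs hfin
      · obtain ⟨L', L2, hrotL', hrotL2, hfinL', hfinL2, hprecc⟩ := hprec
        obtain ⟨PL2, hPL2s, hexpL2⟩ := hrotL2
        have hexpL2' : I.ExposedIn PK L2 :=
          exposed_transfer hPKs t2.1 hPL2s hexpL2 hfinL2
        obtain ⟨K'', hK''1, hK''2⟩ := hprecc M₀ Qs1 PK ⟨hM₀s, hM₀dom⟩ t1 hPKs hexpL2'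
        have hK''Qs : K'' ∈ Qs := by rw [heQs]; exact List.mem_append_left _ hK''1
        exact hLpnot K'' hK''Qs (hK''2.trans hfinL')
  · rintro ⟨hRS, hRnot⟩
    push_neg at hRnot
    obtain ⟨hRne, hRnprec⟩ := hRnot
    by_contra hnotin
    push_neg at hnotin
    obtain ⟨K2, hK2Ls, hK2f⟩ := (hSmem R).mp hRS
    obtain ⟨Us1, Us2, PK2, PK2', _, u1, u2, u3⟩ := hseqS.split hK2Ls
    have hPK2s : I.IsStable PK2 := u1.stable_end hM₀s
    have hK2rot : I.IsRotation K2 := ⟨PK2, hPK2s, u2.1⟩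
    have hnprec : ¬ I.Precedes Lp K2 := by
      intro hp
      exact hRnprec ⟨Lp, K2, hLprot, hK2rot, rfl, hK2f, hp⟩
    unfold Precedes at hnprec
    push_neg at hnprec
    obtain ⟨M₀'', Qs', M'', hopt'', hseq'', hstab'', hexp'', hnone⟩ := hnprec
    have hM₀eq : M₀'' = M₀ := manOptimal_unique I hopt'' ⟨hM₀s, hM₀dom⟩
    rw [hM₀eq] at hseq''
    have hnoLp : ∀ K'' ∈ Qs', ¬ I.Produces K'' m w := by
      intro K'' hK'' hprod''
      obtain ⟨Vs1, Vs2, PV, PV', _, v1, v2, _⟩ := hseq''.split hK''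
      have hPVs : I.IsStable PV := v1.stable_end hM₀s
      exact hnone K'' hK''
        (produces_unique hPVs v2.1 hRLps hexpLp hprod'' hLpprod)
    have hM''m : I.mrank m (M'' m) < I.mrank m w := by
      by_contra hge
      push_neg at hge
      obtain ⟨K'', hK'', hprod''⟩ := hseq''.arrive hM₀s hSP hM₀m hge
      exact hnoLp K'' hK'' hprod''
    have hAllAbove : ∀ i : Fin K2.length,
        I.mrank (K2.get i).1 (Jup (K2.get i).1) ≤ I.mrank (K2.get i).1 (K2.get i).2 := by
      intro i
      by_contra hgt
      push_neg at hgt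
      have hSPi : I.IsStablePair (K2.get i).1 (K2.get i).2 := ⟨PK2, hPK2s, u2.1.matched i⟩
      have hM₀i : I.mrank (K2.get i).1 (M₀ (K2.get i).1) ≤
          I.mrank (K2.get i).1 (K2.get i).2 := by
        have h := hM₀dom PK2 hPK2s (K2.get i).1
        rw [u2.1.matched i] at h
        exact h
      obtain ⟨K3, hK3, hab3⟩ := hQs.cross hM₀s hSPi hM₀i hgt
      obtain ⟨Ws1, Ws2, PW, PW', _, w1, w2, _⟩ := hQs.split hK3
      have hPWs : I.IsStable PW := w1.stable_end hM₀s
      have hfin : K3.toFinset = K2.toFinset := by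
        refine rot_unique hPWs w2.1 hPK2s u2.1 hab3 ?_
        have h : ((K2.get i).1, (K2.get i).2) = K2.get i := rfl
        rw [h]
        exact List.get_mem _ _
      exact hnotin K3 hK3 (hfin.trans hK2f)
    obtain ⟨W, hW⟩ := elim_exists hexp''
    have hWs : I.IsStable W := hW.stable hstab''
    have hWm : I.mrank m (W m) < I.mrank m w := by
      by_cases hmem : m ∈ K2.map Prod.fst
      · obtain ⟨im, him⟩ := mem_map_fst_iff.mp hmem
        rcases lt_trichotomy (I.mrank m (W m)) (I.mrank m w) with h' | h' | h'
        · exact h'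
        · exfalso
          have hWmw : W m = w := I.mrank_inj m h'
          have hprod2 : I.Produces K2 m w := by
            refine ⟨im, him, ?_⟩
            show (K2.get (rnxt K2 im)).2 = w
            rw [← him] at hWmw
            rw [hW.get_eq im] at hWmw
            exact hWmw
          have hfin := produces_unique hstab'' hexp'' hRLps hexpLp hprod2 hLpprod
          exact hRne (hK2f.symm.trans hfin)
        · exfalso
          have hseqW : I.ElimSeq M₀ (Qs' ++ [K2]) W := hseq''.append' (ElimSeq.single hW)
          obtain ⟨K'', hK'', hprod''⟩ := hseqW.arrive hM₀s hSP hM₀m (le_of_lt h')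
          rcases List.mem_append.mp hK'' with h'' | h''
          · exact hnoLp K'' h'' hprod''
          · have he : K'' = K2 := by simpa using h''
            rw [he] at hprod''
            have hfin := produces_unique hstab'' hexp'' hRLps hexpLp hprod'' hLpprod
            exact hRne (hK2f.symm.trans hfin)
      · rw [hW.not_mem_eq hmem]
        exact hM''m
    have hZs : I.IsStable (I.pjoin W M) := I.pjoin_stable hWs hM
    have hZdom : I.Dominates (I.pjoin W M) M := I.pjoin_dominates_right hWs hM
    have hZm : I.mrank m (I.pjoin W M m) < I.mrank m w :=
      lt_of_le_of_lt (I.pjoin_dominates_left hWs hM m) hWm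
    have hZJup : I.Dominates (I.pjoin W M) Jup := hworst _ hZs hZdom hZm
    have hpos2 : 0 < K2.length := by have := u2.1.1; omega
    set i0 : Fin K2.length := ⟨0, hpos2⟩
    have hWa : I.mrank (K2.get i0).1 (K2.get i0).2 <
        I.mrank (K2.get i0).1 (W (K2.get i0).1) := by
      have h1 := hW.strict i0
      rw [hW.1.matched i0] at h1
      exact h1
    have hMa : I.mrank (K2.get i0).1 (K2.get i0).2 <
        I.mrank (K2.get i0).1 (M (K2.get i0).1) := by
      have h1 := u2.strict i0
      rw [u2.1.matched i0] at h1
      exact lt_of_lt_of_le h1 (u3.mono (K2.get i0).1)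
    have hZa : I.mrank (K2.get i0).1 (K2.get i0).2 <
        I.mrank (K2.get i0).1 (I.pjoin W M (K2.get i0).1) := by
      rcases I.pjoin_eq_or hWs hM (K2.get i0).1 with e | e
      · rw [e]; exact hWa
      · rw [e]; exact hMa
    have h1 := hZJup (K2.get i0).1
    have h2 := hAllAbove i0
    omega

end MainUp

section MainDown
variable {I : SMInst n}

lemma down_repair_main {M₀ M Jdn : Fin n ≃ Fin n} {S : Finset (Finset (Fin n × Fin n))}
    {m w : Fin n}
    (hM₀ : I.IsManOptimal M₀) (hM : I.IsStable M)
    (hc : I.Corresponds M₀ S M) (hmw : M m = w)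
    (hJs : I.IsStable Jdn) (hJdom : I.Dominates M Jdn)
    (hJm : I.mrank m w < I.mrank m (Jdn m))
    (hbest : ∀ Z : Fin n ≃ Fin n, I.IsStable Z → I.Dominates M Z →
      I.mrank m w < I.mrank m (Z m) → I.Dominates Jdn Z) :
    I.IsDownRepair M₀ S m w Jdn := by
  classical
  obtain ⟨Ls, hnodupS, hsetS, hseqS⟩ := hc
  obtain ⟨hM₀s, hM₀dom⟩ := hM₀
  have hSmem : ∀ R, R ∈ S ↔ ∃ K ∈ Ls, K.toFinset = R := by
    intro R
    rw [← hsetS, List.mem_toFinset, List.mem_map]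
  have hSP : I.IsStablePair m w := ⟨M, hM, hmw⟩
  obtain ⟨Ks, hKs⟩ := reach' hM hJs hJdom
  have hseqFull : I.ElimSeq M₀ (Ls ++ Ks) Jdn := hseqS.append' hKs
  have hMm : I.mrank m (M m) ≤ I.mrank m w := by rw [hmw]
  obtain ⟨Le, hLeKs, hmwLe⟩ := hKs.cross hM hSP hMm hJm
  obtain ⟨Ks1, Ks2, Pst, Pst', heKs, k1, k2, k3⟩ := hKs.split hLeKs
  have hPsts : I.IsStable Pst := k1.stable_end hM
  have hexpLe : I.ExposedIn Pst Le := k2.1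
  have hLerot : I.IsRotation Le := ⟨Pst, hPsts, hexpLe⟩
  have hseqPre : I.ElimSeq M₀ (Ls ++ Ks1) Pst := hseqS.append' k1
  refine ⟨Le, ((Ls ++ Ks).map List.toFinset).toFinset, hLerot, hmwLe, ?_,
    Ls ++ Ks, hseqFull.nodup_finsets hM₀s, rfl, hseqFull⟩
  intro R
  rw [List.mem_toFinset, List.mem_map]
  constructor
  · rintro ⟨K, hKmem, rfl⟩
    rcases List.mem_append.mp hKmem with hKLs | hKKs
    · exact Or.inl ((hSmem _).mpr ⟨K, hKLs, rfl⟩)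
    · by_cases hfinLe : K.toFinset = Le.toFinset
      · exact Or.inr (Or.inl hfinLe)
      · right; right
        obtain ⟨Vs1, Vs2, PK, PK', heV, v1, v2, v3⟩ := hKs.split hKKs
        have hPKs : I.IsStable PK := v1.stable_end hM
        have hKrot : I.IsRotation K := ⟨PK, hPKs, v2.1⟩
        refine ⟨K, Le, hKrot, hLerot, rfl, rfl, ?_⟩
        intro M₀'' Qs' M'' hopt'' hseq'' hstab'' hexpLe''
        have hM₀eq : M₀'' = M₀ := manOptimal_unique I hopt'' ⟨hM₀s, hM₀dom⟩
        rw [hM₀eq] at hseq''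
        have hpos : 0 < K.length := by have := v2.1.1; omega
        set i0 : Fin K.length := ⟨0, hpos⟩
        set a := (K.get i0).1 with ha
        set b := (K.get i0).2 with hb
        have habK : (a, b) ∈ K := by
          have h : K.get i0 = (a, b) := rfl
          rw [← h]; exact List.get_mem _ _
        have hSPab : I.IsStablePair a b := ⟨PK, hPKs, v2.1.matched i0⟩
        have hJdna : I.mrank a b < I.mrank a (Jdn a) := by
          have h1 := v2.strict i0
          rw [v2.1.matched i0] at h1
          exact lt_of_lt_of_le h1 (v3.mono a)
        have hM₀a : I.mrank a (M₀ a) ≤ I.mrank a b := by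
          have h := hM₀dom PK hPKs a
          rw [v2.1.matched i0] at h
          exact h
        have hMa : I.mrank a (M a) ≤ I.mrank a b := by
          have h2 := v1.mono a
          rw [v2.1.matched i0] at h2
          exact h2
        obtain ⟨E, hE⟩ := elim_exists hexpLe''
        have hEs : I.IsStable E := hE.stable hstab''
        obtain ⟨iLe, hiLe⟩ := List.get_of_mem hmwLe
        have hfstLe : (Le.get iLe).1 = m := by rw [hiLe]
        have hM''m : M'' (Le.get iLe).1 = (Le.get iLe).2 := hexpLe''.matched iLe
        have hEm : I.mrank m w < I.mrank m (E m) := by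
          have h1 := hE.strict iLe
          rw [hM''m] at h1
          rw [hfstLe] at h1
          have hsnd : (Le.get iLe).2 = w := by rw [hiLe]
          rw [hsnd] at h1
          exact h1
        have hN3s : I.IsStable (I.pmeet E M) := I.pmeet_stable hEs hM
        have hN3dom : I.Dominates M (I.pmeet E M) := I.pmeet_dominated_right hEs hM
        have hN3m : I.mrank m w < I.mrank m (I.pmeet E M m) :=
          lt_of_lt_of_le hEm (I.pmeet_dominated_left hEs hM m)
        have hJdnN3 : I.Dominates Jdn (I.pmeet E M) := hbest _ hN3s hN3dom hN3m
        have hN3a : I.mrank a b < I.mrank a (I.pmeet E M a) :=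
          lt_of_lt_of_le hJdna (hJdnN3 a)
        have hEa : I.mrank a b < I.mrank a (E a) := by
          rcases I.pmeet_eq_or hEs hM a with e | e
          · rw [e] at hN3a; exact hN3a
          · rw [e] at hN3a
            exact absurd (lt_of_lt_of_le hN3a hMa) (lt_irrefl _)
        have hseqE : I.ElimSeq M₀ (Qs' ++ [Le]) E := hseq''.append' (ElimSeq.single hE)
        obtain ⟨K'', hK''mem, habK''⟩ := hseqE.cross hM₀s hSPab hM₀a hEa
        rcases List.mem_append.mp hK''mem with h'' | h''
        · obtain ⟨Zs1, Zs2, PZ, PZ', _, z1, z2, _⟩ := hseq''.split h''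
          have hPZs : I.IsStable PZ := z1.stable_end hM₀s
          exact ⟨K'', h'', rot_unique hPZs z2.1 hPKs v2.1 habK'' habK⟩
        · exfalso
          have he : K'' = Le := by simpa using h''
          rw [he] at habK''
          exact hfinLe (rot_unique hPKs v2.1 hstab'' hexpLe'' habK habK'')
  · rintro (hRS | hfin | hprec)
    · obtain ⟨K, hKLs, hKf⟩ := (hSmem R).mp hRS
      exact ⟨K, List.mem_append_left _ hKLs, hKf⟩
    · exact ⟨Le, List.mem_append_right _ hLeKs, hfin.symm⟩
    · obtain ⟨L', L2, hrotL', hrotL2, hfinL', hfinL2, hprecc⟩ := hprec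
      obtain ⟨PL2, hPL2s, hexpL2⟩ := hrotL2
      have hexpL2' : I.ExposedIn Pst L2 :=
        exposed_transfer hPsts hexpLe hPL2s hexpL2 hfinL2
      obtain ⟨K'', hK''1, hK''2⟩ :=
        hprecc M₀ (Ls ++ Ks1) Pst ⟨hM₀s, hM₀dom⟩ hseqPre hPsts hexpL2'
      refine ⟨K'', ?_, hK''2.trans hfinL'⟩
      rcases List.mem_append.mp hK''1 with h | h
      · exact List.mem_append_left _ h
      · refine List.mem_append_right _ ?_
        rw [heKs]
        exact List.mem_append_left _ h

end MainDown
end SMInst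

open SMInst
/-- closest-repair theorem: for a non-fixed pair `(m, w)` of a stable
matching `M`, a stable matching avoiding `(m, w)` at minimum distance from `M` is
attained by `M↑` or `M↓`. -/
theorem closest_repair_is_up_or_down {n : ℕ} (I : SMInst n)
    (M₀ M : Fin n ≃ Fin n) (hM₀ : I.IsManOptimal M₀) (hM : I.IsStable M)
    (S : Finset (Finset (Fin n × Fin n))) (hS : I.IsClosedF S)
    (hc : I.Corresponds M₀ S M) (m w : Fin n) (hmw : M m = w)
    (hnonfixed : ∃ M' : Fin n ≃ Fin n, I.IsStable M' ∧ M' m ≠ w) :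
    ∃ N : Fin n ≃ Fin n, I.IsStable N ∧ N m ≠ w ∧
      (∀ N' : Fin n ≃ Fin n, I.IsStable N' → N' m ≠ w → I.mdist M N ≤ I.mdist M N') ∧
      (I.IsUpRepair M₀ S m w N ∨ I.IsDownRepair M₀ S m w N) := by
  classical
  -- the sets of "up"-avoiders and "down"-avoiders
  set Aup : Finset (Fin n ≃ Fin n) := Finset.univ.filter
    (fun Z => I.IsStable Z ∧ I.Dominates Z M ∧ I.mrank m (Z m) < I.mrank m w) with hAup
  set Adn : Finset (Fin n ≃ Fin n) := Finset.univ.filter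
    (fun Z => I.IsStable Z ∧ I.Dominates M Z ∧ I.mrank m w < I.mrank m (Z m)) with hAdn
  have hAupmem : ∀ Z, Z ∈ Aup ↔
      (I.IsStable Z ∧ I.Dominates Z M ∧ I.mrank m (Z m) < I.mrank m w) := by
    intro Z; simp [hAup]
  have hAdnmem : ∀ Z, Z ∈ Adn ↔
      (I.IsStable Z ∧ I.Dominates M Z ∧ I.mrank m w < I.mrank m (Z m)) := by
    intro Z; simp [hAdn]
  -- any stable avoider is at least as far as some element of Aup or Adn
  have hreduce : ∀ N', I.IsStable N' → N' m ≠ w →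
      (∃ Z ∈ Aup, I.mdist M Z ≤ I.mdist M N') ∨
      (∃ Z ∈ Adn, I.mdist M Z ≤ I.mdist M N') := by
    intro N' hN's hN'm
    have hne : I.mrank m (N' m) ≠ I.mrank m w := fun h => hN'm (I.mrank_inj m h)
    rcases lt_or_gt_of_ne hne with hlt | hgt
    · left
      refine ⟨I.pjoin N' M, (hAupmem _).mpr
        ⟨I.pjoin_stable hN's hM, I.pjoin_dominates_right hN's hM,
          lt_of_le_of_lt (I.pjoin_dominates_left hN's hM m) hlt⟩, ?_⟩
      apply mdist_le_of_agree
      intro x hx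
      rcases I.pjoin_eq_or hN's hM x with e | e
      · rw [e]; exact hx.symm
      · exact e
    · right
      refine ⟨I.pmeet N' M, (hAdnmem _).mpr
        ⟨I.pmeet_stable hN's hM, I.pmeet_dominated_right hN's hM,
          lt_of_lt_of_le hgt (I.pmeet_dominated_left hN's hM m)⟩, ?_⟩
      apply mdist_le_of_agree
      intro x hx
      rcases I.pmeet_eq_or hN's hM x with e | e
      · rw [e]; exact hx.symm
      · exact e
  -- extremal elements
  have hupdata : Aup.Nonempty → ∃ Jup, Jup ∈ Aup ∧ ∀ Z ∈ Aup, I.Dominates Z Jup := by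
    intro hne
    obtain ⟨Jup, hJA, hJmax⟩ := Aup.exists_max_image (fun Z => ∑ x, I.mrank x (Z x)) hne
    obtain ⟨hJs, hJdom, hJm⟩ := (hAupmem Jup).mp hJA
    refine ⟨Jup, hJA, ?_⟩
    intro Z hZ
    obtain ⟨hZs, hZdom, hZm⟩ := (hAupmem Z).mp hZ
    have hmeetA : I.pmeet Z Jup ∈ Aup := by
      refine (hAupmem _).mpr ⟨I.pmeet_stable hZs hJs, ?_, ?_⟩
      · intro x
        rcases I.pmeet_eq_or hZs hJs x with e | e
        · rw [e]; exact hZdom x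
        · rw [e]; exact hJdom x
      · rcases I.pmeet_eq_or hZs hJs m with e | e
        · rw [e]; exact hZm
        · rw [e]; exact hJm
    have hsum := hJmax _ hmeetA
    have hpt : ∀ x, I.mrank x (Jup x) ≤ I.mrank x (I.pmeet Z Jup x) :=
      I.pmeet_dominated_right hZs hJs
    have hall : ∀ x, I.mrank x (I.pmeet Z Jup x) = I.mrank x (Jup x) := by
      by_contra hcon
      push_neg at hcon
      obtain ⟨x0, hx0⟩ := hcon
      have : (∑ x, I.mrank x (Jup x)) < ∑ x, I.mrank x (I.pmeet Z Jup x) := by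
        apply Finset.sum_lt_sum
        · intro i _; exact hpt i
        · exact ⟨x0, Finset.mem_univ x0, lt_of_le_of_ne (hpt x0) (Ne.symm hx0)⟩
      omega
    intro x
    have := I.pmeet_dominated_left hZs hJs x
    rw [hall x] at this
    exact this
  have hdndata : Adn.Nonempty → ∃ Jdn, Jdn ∈ Adn ∧ ∀ Z ∈ Adn, I.Dominates Jdn Z := by
    intro hne
    obtain ⟨Jdn, hJA, hJmin⟩ := Adn.exists_min_image (fun Z => ∑ x, I.mrank x (Z x)) hne
    obtain ⟨hJs, hJdom, hJm⟩ := (hAdnmem Jdn).mp hJA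
    refine ⟨Jdn, hJA, ?_⟩
    intro Z hZ
    obtain ⟨hZs, hZdom, hZm⟩ := (hAdnmem Z).mp hZ
    have hjoinA : I.pjoin Jdn Z ∈ Adn := by
      refine (hAdnmem _).mpr ⟨I.pjoin_stable hJs hZs, ?_, ?_⟩
      · intro x
        rcases I.pjoin_eq_or hJs hZs x with e | e
        · rw [e]; exact hJdom x
        · rw [e]; exact hZdom x
      · rcases I.pjoin_eq_or hJs hZs m with e | e
        · rw [e]; exact hJm
        · rw [e]; exact hZm
    have hsum := hJmin _ hjoinA
    have hpt : ∀ x, I.mrank x (I.pjoin Jdn Z x) ≤ I.mrank x (Jdn x) :=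
      I.pjoin_dominates_left hJs hZs
    have hall : ∀ x, I.mrank x (I.pjoin Jdn Z x) = I.mrank x (Jdn x) := by
      by_contra hcon
      push_neg at hcon
      obtain ⟨x0, hx0⟩ := hcon
      have : (∑ x, I.mrank x (I.pjoin Jdn Z x)) < ∑ x, I.mrank x (Jdn x) := by
        apply Finset.sum_lt_sum
        · intro i _; exact hpt i
        · exact ⟨x0, Finset.mem_univ x0, lt_of_le_of_ne (hpt x0) hx0⟩
      omega
    intro x
    have := I.pjoin_dominates_right hJs hZs x
    rw [← hall x]
    exact this
  -- distance minimality within each side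
  have hminup : ∀ Jup, Jup ∈ Aup → (∀ Z ∈ Aup, I.Dominates Z Jup) →
      ∀ Z ∈ Aup, I.mdist M Jup ≤ I.mdist M Z := by
    intro Jup hJA hworst Z hZ
    obtain ⟨hJs, hJdom, hJm⟩ := (hAupmem Jup).mp hJA
    apply mdist_le_of_agree
    intro x hx
    have h1 := hworst Z hZ x
    have h2 := hJdom x
    have h3 : I.mrank x (M x) = I.mrank x (Z x) := by rw [hx]
    exact I.mrank_inj x (by omega)
  have hmindn : ∀ Jdn, Jdn ∈ Adn → (∀ Z ∈ Adn, I.Dominates Jdn Z) →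
      ∀ Z ∈ Adn, I.mdist M Jdn ≤ I.mdist M Z := by
    intro Jdn hJA hbest Z hZ
    obtain ⟨hJs, hJdom, hJm⟩ := (hAdnmem Jdn).mp hJA
    apply mdist_le_of_agree
    intro x hx
    have h1 := hbest Z hZ x
    have h2 := hJdom x
    have h3 : I.mrank x (M x) = I.mrank x (Z x) := by rw [hx]
    exact I.mrank_inj x (by omega)
  -- at least one side is nonempty
  obtain ⟨M', hM's, hM'm⟩ := hnonfixed
  have hsome : Aup.Nonempty ∨ Adn.Nonempty := by
    rcases hreduce M' hM's hM'm with ⟨Z, hZ, _⟩ | ⟨Z, hZ, _⟩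
    · exact Or.inl ⟨Z, hZ⟩
    · exact Or.inr ⟨Z, hZ⟩
  by_cases hAupne : Aup.Nonempty
  · obtain ⟨Jup, hJupA, hworst⟩ := hupdata hAupne
    obtain ⟨hJups, hJupdom, hJupm⟩ := (hAupmem Jup).mp hJupA
    have hJupne : Jup m ≠ w := by
      intro h
      rw [h] at hJupm
      exact lt_irrefl _ hJupm
    have hup_repair : I.IsUpRepair M₀ S m w Jup :=
      up_repair_main hM₀ hM hc hmw hJups hJupdom hJupm
        (fun Z h1 h2 h3 => hworst Z ((hAupmem Z).mpr ⟨h1, h2, h3⟩))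
    by_cases hAdnne : Adn.Nonempty
    · obtain ⟨Jdn, hJdnA, hbest⟩ := hdndata hAdnne
      obtain ⟨hJdns, hJdndom, hJdnm⟩ := (hAdnmem Jdn).mp hJdnA
      have hJdnne : Jdn m ≠ w := by
        intro h
        rw [h] at hJdnm
        exact lt_irrefl _ hJdnm
      by_cases hcmp : I.mdist M Jup ≤ I.mdist M Jdn
      · refine ⟨Jup, hJups, hJupne, ?_, Or.inl hup_repair⟩
        intro N' hN's hN'm
        rcases hreduce N' hN's hN'm with ⟨Z, hZ, hd⟩ | ⟨Z, hZ, hd⟩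
        · exact le_trans (hminup Jup hJupA hworst Z hZ) hd
        · exact le_trans hcmp (le_trans (hmindn Jdn hJdnA hbest Z hZ) hd)
      · push_neg at hcmp
        refine ⟨Jdn, hJdns, hJdnne, ?_, Or.inr
          (down_repair_main hM₀ hM hc hmw hJdns hJdndom hJdnm
            (fun Z h1 h2 h3 => hbest Z ((hAdnmem Z).mpr ⟨h1, h2, h3⟩)))⟩
        intro N' hN's hN'm
        rcases hreduce N' hN's hN'm with ⟨Z, hZ, hd⟩ | ⟨Z, hZ, hd⟩
        · exact le_trans (le_of_lt hcmp) (le_trans (hminup Jup hJupA hworst Z hZ) hd)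
        · exact le_trans (hmindn Jdn hJdnA hbest Z hZ) hd
    · refine ⟨Jup, hJups, hJupne, ?_, Or.inl hup_repair⟩
      intro N' hN's hN'm
      rcases hreduce N' hN's hN'm with ⟨Z, hZ, hd⟩ | ⟨Z, hZ, _⟩
      · exact le_trans (hminup Jup hJupA hworst Z hZ) hd
      · exact absurd ⟨Z, hZ⟩ hAdnne
  · have hAdnne : Adn.Nonempty := by
      rcases hsome with h | h
      · exact absurd h hAupne
      · exact h
    obtain ⟨Jdn, hJdnA, hbest⟩ := hdndata hAdnne
    obtain ⟨hJdns, hJdndom, hJdnm⟩ := (hAdnmem Jdn).mp hJdnA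
    have hJdnne : Jdn m ≠ w := by
      intro h
      rw [h] at hJdnm
      exact lt_irrefl _ hJdnm
    refine ⟨Jdn, hJdns, hJdnne, ?_, Or.inr
      (down_repair_main hM₀ hM hc hmw hJdns hJdndom hJdnm
        (fun Z h1 h2 h3 => hbest Z ((hAdnmem Z).mpr ⟨h1, h2, h3⟩)))⟩
    intro N' hN's hN'm
    rcases hreduce N' hN's hN'm with ⟨Z, hZ, _⟩ | ⟨Z, hZ, hd⟩
    · exact absurd ⟨Z, hZ⟩ hAupne
    · exact le_trans (hmindn Jdn hJdnA hbest Z hZ) hd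
end
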